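/- arXiv:1510.05137 — 7 statements merged into one kernel-verified Lean document; each statement's English description precedes it below -/
import Mathlib

section
/- Let d ≥ 1, N ≥ 2, M ≥ 1 be integers, let r be an integer with 1 ≤ r ≤ N − 1, set ρ = r/N, and let ε ∈ (0,1]. Under the uniform probability measure on functions f : [M] → ([N])^d (each right vertex picks d random left neighbors independently with replacement), the probability that there exists a subset S ⊆ [N] with |S| = r such that the number of j ∈ [M] with f(j)(t) ∉ S for all t ∈ [d] exceeds (1+ε)(1−ρ)^d · M is at most 2^N · exp(−ε²(1−ρ)^d M / 3). In particular, if M is sufficiently large compared to N, with high probability every subset S ⊆ [N] of size r has at least (1 − (1+ε)(1−ρ)^d)M distinct neighbors. -/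
/-!
For a fixed `S` with `|S| = r`, the number of right vertices missing `S` is a sum of `M`
independent Bernoulli variables of mean `p = (1 - r/N)^d`. Markov's inequality applied to
`exp (t X)` with `t = 2ε/3` (the moment generating function of `X` factors over the `M` coordinates)
gives the Chernoff bound `exp (-ε² p M / 3)`, and a union bound over the `C(N, r) ≤ 2^N` sets `S`
finishes the proof.
-/

open Finset Real

lemma exp_two_mul_div_three_sub_one_sub_le {ε : ℝ} (hε0 : 0 ≤ ε) (hε1 : ε ≤ 1) :
    exp (2 * ε / 3) - 1 - 2 * ε / 3 * (1 + ε) ≤ -(ε ^ 2 / 3) := by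
  have h := exp_bound' (x := 2 * ε / 3) (by positivity) (by linarith) (n := 3) (by norm_num)
  norm_num [sum_range_succ, Nat.factorial] at h
  nlinarith [pow_le_pow_of_le_one hε0 hε1 (show 2 ≤ 3 by norm_num)]

lemma card_filter_lt_mul_exp_le_sum_exp {β : Type*} (s : Finset β) (g : β → ℝ) (a : ℝ)
    {t : ℝ} (ht : 0 ≤ t) :
    #{x ∈ s | a < g x} * exp (t * a) ≤ ∑ x ∈ s, exp (t * g x) :=
  calc #{x ∈ s | a < g x} * exp (t * a) ≤ ∑ x ∈ s with a < g x, exp (t * g x) := by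
        rw [← nsmul_eq_mul]
        exact card_nsmul_le_sum _ _ _ fun x hx ↦
          exp_le_exp.2 (mul_le_mul_of_nonneg_left (mem_filter.1 hx).2.le ht)
    _ ≤ ∑ x ∈ s, exp (t * g x) :=
        sum_le_sum_of_subset_of_nonneg (filter_subset _ _) fun _ _ _ ↦ (exp_pos _).le

lemma card_filter_exists_le_sum {β σ : Type*} [DecidableEq β] (s : Finset σ) (u : Finset β)
    (P : σ → β → Prop) [∀ S, DecidablePred (P S)] :
    #{x ∈ u | ∃ S ∈ s, P S x} ≤ ∑ S ∈ s, #{x ∈ u | P S x} :=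
  calc #{x ∈ u | ∃ S ∈ s, P S x} ≤ #(s.biUnion fun S ↦ {x ∈ u | P S x}) :=
        card_le_card fun x hx ↦ by
          obtain ⟨hxu, S, hS, hP⟩ := mem_filter.1 hx
          exact mem_biUnion.2 ⟨S, hS, mem_filter.2 ⟨hxu, hP⟩⟩
    _ ≤ ∑ S ∈ s, #{x ∈ u | P S x} := card_biUnion_le

section
variable {ι κ α : Type*} [Fintype ι] [DecidableEq ι] [Fintype κ] [DecidableEq κ]
  [Fintype α] [DecidableEq α]

lemma card_piFinset_compl_div_card [Nonempty α] (S : Finset α) :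
    (#(Fintype.piFinset fun _ : ι ↦ Sᶜ) : ℝ) / Fintype.card (ι → α) =
      (1 - #S / Fintype.card α) ^ Fintype.card ι := by
  rw [Fintype.card_piFinset, prod_const, card_compl, card_univ, Fintype.card_fun]
  push_cast [Nat.cast_sub (card_le_univ S)]
  rw [← div_pow, sub_div, div_self (by positivity)]

lemma sum_exp_mul_card_filter_mem (A : Finset α) (t : ℝ) :
    ∑ f : ι → α, exp (t * #{j | f j ∈ A}) =
      (Fintype.card α + #A * (exp t - 1)) ^ Fintype.card ι := by
  have hprod (f : ι → α) :
      exp (t * #{j | f j ∈ A}) = ∏ j, if f j ∈ A then exp t else 1 := by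
    rw [prod_ite, prod_const, prod_const, one_pow, mul_one, ← exp_nat_mul, mul_comm]
  have hsum : ∑ v : α, (if v ∈ A then exp t else 1) = Fintype.card α + #A * (exp t - 1) := by
    rw [sum_ite, sum_const, sum_const, filter_mem_eq_inter, univ_inter, filter_not,
      filter_mem_eq_inter, univ_inter, card_univ_sdiff, nsmul_eq_mul, nsmul_eq_mul,
      Nat.cast_sub (card_le_univ A)]
    ring
  calc ∑ f : ι → α, exp (t * #{j | f j ∈ A})
      = ∑ f : ι → α, ∏ j, if f j ∈ A then exp t else 1 := sum_congr rfl fun f _ ↦ hprod f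
    _ = ∏ _j : ι, ∑ v : α, if v ∈ A then exp t else 1 :=
      (Fintype.prod_sum fun (_ : ι) (v : α) ↦ if v ∈ A then exp t else 1).symm
    _ = _ := by rw [prod_const, card_univ, hsum]

theorem card_filter_lt_card_filter_mem_le [Nonempty α] (A : Finset α) {ε : ℝ} (hε0 : 0 ≤ ε)
    (hε1 : ε ≤ 1) :
    (#{f : ι → α | (1 + ε) * (#A / Fintype.card α) * Fintype.card ι < #{j | f j ∈ A}} : ℝ) ≤
      Fintype.card α ^ Fintype.card ι *
        exp (-(ε ^ 2 * (#A / Fintype.card α) * Fintype.card ι / 3)) := by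
  set n : ℝ := (Fintype.card α : ℝ)
  set m : ℝ := (Fintype.card ι : ℝ)
  set p : ℝ := #A / n
  set t : ℝ := 2 * ε / 3
  have hp : 0 ≤ p := by positivity
  have hm : 0 ≤ m := Nat.cast_nonneg _
  have ht : 0 ≤ t := by positivity
  have hmgf : ∑ f : ι → α, exp (t * #{j | f j ∈ A}) ≤
      n ^ Fintype.card ι * exp (p * (exp t - 1) * m) := by
    have hA : (#A : ℝ) = n * p := (mul_div_cancel₀ _ (by simp [n, Fintype.card_ne_zero])).symm
    have hexp : 0 ≤ exp t - 1 := by linarith [one_le_exp ht]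
    rw [sum_exp_mul_card_filter_mem,
      show (Fintype.card α : ℝ) + #A * (exp t - 1) = n * (1 + p * (exp t - 1)) by rw [hA]; ring,
      mul_pow, mul_comm _ m, exp_nat_mul]
    refine mul_le_mul_of_nonneg_left (pow_le_pow_left₀ ?_ ?_ _) (by positivity)
    · exact add_nonneg zero_le_one (mul_nonneg hp hexp)
    · linarith [add_one_le_exp (p * (exp t - 1))]
  have hε : p * m * (exp t - 1 - t * (1 + ε)) ≤ p * m * -(ε ^ 2 / 3) :=
    mul_le_mul_of_nonneg_left (exp_two_mul_div_three_sub_one_sub_le hε0 hε1) (mul_nonneg hp hm)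
  calc (#{f : ι → α | (1 + ε) * p * m < #{j | f j ∈ A}} : ℝ)
      = #{f : ι → α | (1 + ε) * p * m < #{j | f j ∈ A}} * exp (t * ((1 + ε) * p * m)) *
          exp (-(t * ((1 + ε) * p * m))) := by
        simp [mul_assoc, ← exp_add]
    _ ≤ n ^ Fintype.card ι * exp (p * (exp t - 1) * m) * exp (-(t * ((1 + ε) * p * m))) := by
        exact mul_le_mul_of_nonneg_right
          ((card_filter_lt_mul_exp_le_sum_exp _ _ _ ht).trans hmgf) (exp_pos _).le
    _ = n ^ Fintype.card ι * exp (p * m * (exp t - 1 - t * (1 + ε))) := by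
        rw [mul_assoc, ← exp_add]; ring_nf
    _ ≤ n ^ Fintype.card ι * exp (-(ε ^ 2 * p * m / 3)) := by
        gcongr
        linarith

theorem card_filter_lt_card_filter_forall_notMem_le [Nonempty α] (S : Finset α) {ε : ℝ}
    (hε0 : 0 ≤ ε) (hε1 : ε ≤ 1) :
    (#{f : ι → κ → α | (1 + ε) * (1 - #S / Fintype.card α) ^ Fintype.card κ * Fintype.card ι <
        #{j | ∀ k, f j k ∉ S}} : ℝ) ≤
      Fintype.card (ι → κ → α) *
        exp (-(ε ^ 2 * (1 - #S / Fintype.card α) ^ Fintype.card κ * Fintype.card ι / 3)) := by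
  have := card_filter_lt_card_filter_mem_le (ι := ι) (Fintype.piFinset fun _ : κ ↦ Sᶜ) hε0 hε1
  rw [card_piFinset_compl_div_card] at this
  simpa [Fintype.card_fun] using this

end

theorem stmt_1_general (d N M r : ℕ) (hN : 2 ≤ N) (ε : ℝ) (hε0 : 0 < ε) (hε1 : ε ≤ 1) :
    (({f : Fin M → Fin d → Fin N | ∃ S : Finset (Fin N), S.card = r ∧
        (1 + ε) * (1 - (r : ℝ) / N) ^ d * M <
          ({j : Fin M | ∀ t : Fin d, f j t ∉ S}.ncard : ℝ)}.ncard : ℝ) /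
        (Fintype.card (Fin M → Fin d → Fin N) : ℝ))
      ≤ 2 ^ N * Real.exp (-(ε ^ 2 * (1 - (r : ℝ) / N) ^ d * M / 3)) := by
  set E := Real.exp (-(ε ^ 2 * (1 - (r : ℝ) / N) ^ d * M / 3))
  set T : ℝ := (Fintype.card (Fin M → Fin d → Fin N) : ℝ)
  have : Nonempty (Fin N) := ⟨⟨0, by omega⟩⟩
  have hbad (S : Finset (Fin N)) (hS : #S = r) :
      (#{f : Fin M → Fin d → Fin N | (1 + ε) * (1 - (r : ℝ) / N) ^ d * M <
        #{j | ∀ t, f j t ∉ S}} : ℝ) ≤ T * E := by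
    subst hS
    -- the two sides differ only in the `Decidable` instances of the inner filters
    convert card_filter_lt_card_filter_forall_notMem_le (ι := Fin M) (κ := Fin d) S hε0.le hε1
      using 8 <;> simp
  rw [div_le_iff₀ (by positivity)]
  simp only [Set.ncard_eq_toFinset_card', Set.toFinset_ofPred]
  calc _ ≤ ((∑ S ∈ powersetCard r univ, #{f : Fin M → Fin d → Fin N |
          (1 + ε) * (1 - (r : ℝ) / N) ^ d * M < #{j | ∀ t, f j t ∉ S}} : ℕ) : ℝ) := by
        refine Nat.cast_le.2 ((card_le_card fun f hf ↦ ?_).trans (card_filter_exists_le_sum _ _ _))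
        simpa [mem_powersetCard] using hf
    _ ≤ #(powersetCard r (univ : Finset (Fin N))) * (T * E) := by
        push_cast
        rw [← nsmul_eq_mul]
        exact sum_le_card_nsmul _ _ _ fun S hS ↦ hbad S (mem_powersetCard.1 hS).2
    _ ≤ 2 ^ N * (T * E) := by
        rw [card_powersetCard, card_univ, Fintype.card_fin]
        gcongr
        exact_mod_cast Nat.choose_le_two_pow N r
    _ = 2 ^ N * E * T := by ring

/-- In the random bipartite graph model where each right vertex `j ∈ [M]` picks `d`
uniformly random left neighbors with replacement, the probability that some `r`-subset
`S ⊆ [N]` has more than `(1+ε)(1-ρ)^d·M` non-neighbors in `[M]` (where `ρ = r/N`)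
is at most `2^N·exp(-ε²(1-ρ)^d·M/3)`. -/
theorem stmt_1 (d N M r : ℕ) (hd : 1 ≤ d) (hN : 2 ≤ N) (hM : 1 ≤ M)
    (hr1 : 1 ≤ r) (hrN : r ≤ N - 1) (ε : ℝ) (hε0 : 0 < ε) (hε1 : ε ≤ 1) :
    (({f : Fin M → Fin d → Fin N | ∃ S : Finset (Fin N), S.card = r ∧
        (1 + ε) * (1 - (r : ℝ) / N) ^ d * M <
          ({j : Fin M | ∀ t : Fin d, f j t ∉ S}.ncard : ℝ)}.ncard : ℝ) /
        (Fintype.card (Fin M → Fin d → Fin N) : ℝ))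
      ≤ 2 ^ N * Real.exp (-(ε ^ 2 * (1 - (r : ℝ) / N) ^ d * M / 3)) :=
  stmt_1_general d N M r hN ε hε0 hε1
end

section
/- Let F be a finite field with q elements and let A ⊆ F∖{0} be any set of nonzero elements. Then the number of pairs (t, s) ∈ F × F such that α·t + α²·s ≠ 1 for every α ∈ A equals q² − |A|·q + |A|(|A|−1)/2. In particular, for A = F∖{0} (so |A| = q−1) this number equals (q² − q + 2)/2, so the uniform distribution on the codewords (α·t + α²·s)_{α ∈ F∖{0}} stays in the (q−1)-element subset F∖{1} with probability exactly (q² − q + 2)/(2q²). -/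
/-!
The pairs `(t, s)` to avoid form the union of the lines `α t + α² s = 1`, `α ∈ A`. Each line has
`q` points, and two distinct lines meet exactly in `(α⁻¹ + β⁻¹, -(αβ)⁻¹)`. Adding a new line `a` to
the union therefore adds `q - |A|` points: it meets the old lines in `|A|` distinct points, since the
second coordinate `-(aβ)⁻¹` determines `β` (no point lies on three lines). Summing gives
`|A| q - (|A| choose 2)` bad pairs.
-/

open Finset

variable {F : Type*} [Field F] [Fintype F] [DecidableEq F]

def unitLine (α : F) : Finset (F × F) :=
  univ.filter fun ts => α * ts.1 + α ^ 2 * ts.2 = 1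

@[simp]
lemma mem_unitLine {α : F} {ts : F × F} : ts ∈ unitLine α ↔ α * ts.1 + α ^ 2 * ts.2 = 1 := by
  simp [unitLine]

lemma card_unitLine {α : F} (hα : α ≠ 0) : (unitLine α).card = Fintype.card F := by
  rw [← card_univ]
  refine card_bij' (fun ts _ => ts.2) (fun s _ => (α⁻¹ - α * s, s)) (fun _ _ => mem_univ _)
    (fun s _ => ?_) (fun ts hts => ?_) (fun _ _ => rfl)
  · rw [mem_unitLine]
    field_simp
    ring
  · rw [mem_unitLine] at hts
    refine Prod.ext ?_ rfl
    field_simp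
    linear_combination -hts

lemma unitLine_inter_unitLine {α β : F} (hα : α ≠ 0) (hβ : β ≠ 0) (hαβ : α ≠ β) :
    unitLine α ∩ unitLine β = {(α⁻¹ + β⁻¹, -(α * β)⁻¹)} := by
  ext ⟨t, s⟩
  simp only [mem_inter, mem_unitLine, mem_singleton, Prod.mk.injEq]
  constructor
  · rintro ⟨h₁, h₂⟩
    have hs : α * β * s = -1 :=
      mul_left_cancel₀ (sub_ne_zero.mpr hαβ) (by linear_combination β * h₁ - α * h₂)
    have ht : α * β * t = α + β := by linear_combination β * h₁ - α * hs
    constructor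
    · field_simp
      linear_combination ht
    · field_simp
      linear_combination hs
  · rintro ⟨rfl, rfl⟩
    constructor <;> field_simp <;> ring

lemma unitLine_inter_biUnion {a : F} {A : Finset F} (ha : a ≠ 0) (hA : ∀ β ∈ A, β ≠ 0)
    (haA : a ∉ A) :
    unitLine a ∩ A.biUnion unitLine = A.image fun β => (a⁻¹ + β⁻¹, -(a * β)⁻¹) := by
  rw [inter_biUnion, ← biUnion_singleton]
  refine biUnion_congr rfl fun β hβ => ?_
  exact unitLine_inter_unitLine ha (hA β hβ) (ne_of_mem_of_not_mem hβ haA).symm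

lemma card_biUnion_unitLine_add_choose_two {A : Finset F} (hA : ∀ α ∈ A, α ≠ 0) :
    (A.biUnion unitLine).card + A.card.choose 2 = A.card * Fintype.card F := by
  induction A using Finset.induction_on with
  | empty => simp
  | insert a A haA ih =>
    have ha : a ≠ 0 := hA a (mem_insert_self a A)
    have hA' : ∀ β ∈ A, β ≠ 0 := fun β hβ => hA β (mem_insert_of_mem hβ)
    have hmeet : (unitLine a ∩ A.biUnion unitLine).card = A.card := by
      rw [unitLine_inter_biUnion ha hA' haA]
      refine card_image_of_injOn fun β _ γ _ h => ?_
      simpa [ha] using congrArg Prod.snd h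
    have hunion := card_union_add_card_inter (unitLine a) (A.biUnion unitLine)
    rw [biUnion_insert, card_insert_of_notMem haA, Nat.choose_succ_succ', Nat.choose_one_right]
    rw [hmeet, card_unitLine ha] at hunion
    linarith [ih hA']

lemma card_avoiding_add_mul_card (A : Finset F) (hA : ∀ α ∈ A, α ≠ 0) :
    (univ.filter fun ts : F × F => ∀ α ∈ A, α * ts.1 + α ^ 2 * ts.2 ≠ 1).card
        + A.card * Fintype.card F = Fintype.card F ^ 2 + A.card.choose 2 := by
  have havoid : (univ.filter fun ts : F × F => ∀ α ∈ A, α * ts.1 + α ^ 2 * ts.2 ≠ 1)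
      = univ \ A.biUnion unitLine := by
    ext ts
    simp
  have hcompl := card_sdiff_add_card_eq_card (subset_univ (A.biUnion unitLine))
  rw [card_univ, Fintype.card_prod, ← sq] at hcompl
  rw [havoid]
  linarith [card_biUnion_unitLine_add_choose_two hA]

/-- Inclusion–exclusion count: for any set `A` of nonzero field elements, the number of
pairs `(t,s)` with `α·t + α²·s ≠ 1` for all `α ∈ A` is `q² - |A|·q + |A|(|A|-1)/2`;
in particular for `A = F∖{0}` the corresponding staying probability is
`(q² - q + 2)/(2q²)`. -/
theorem stmt_4 (F : Type) [Field F] [Fintype F] [DecidableEq F] (q : ℕ)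
    (hq : Fintype.card F = q) (A : Finset F) (hA : ∀ α ∈ A, α ≠ 0) :
    (Finset.univ.filter fun ts : F × F => ∀ α ∈ A, α * ts.1 + α ^ 2 * ts.2 ≠ 1).card
      = q ^ 2 - A.card * q + A.card * (A.card - 1) / 2 ∧
    (A = Finset.univ.filter (fun α : F => α ≠ 0) →
      ((Finset.univ.filter fun ts : F × F =>
          ∀ α ∈ A, α * ts.1 + α ^ 2 * ts.2 ≠ 1).card : ℝ) / (q : ℝ) ^ 2
        = ((q : ℝ) ^ 2 - q + 2) / (2 * (q : ℝ) ^ 2)) := by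
  have hcount := card_avoiding_add_mul_card A hA
  rw [hq] at hcount
  refine ⟨?_, fun hAeq => ?_⟩
  · have hkq : A.card * q ≤ q ^ 2 := by
      rw [sq, ← hq]
      exact Nat.mul_le_mul_right _ (card_le_univ A)
    rw [← Nat.choose_two_right]
    omega
  · have hk : A.card + 1 = q := by
      rw [hAeq, filter_ne', card_erase_of_mem (mem_univ 0), card_univ, hq,
        Nat.sub_add_cancel (hq ▸ Fintype.card_pos)]
    have hq0 : (q : ℝ) ≠ 0 := Nat.cast_ne_zero.mpr (by omega)
    have hkℝ : (A.card : ℝ) = q - 1 := by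
      rw [← hk]
      push_cast
      ring
    have hcountℝ := congrArg (Nat.cast : ℕ → ℝ) hcount
    push_cast [Nat.cast_choose_two] at hcountℝ
    rw [hkℝ] at hcountℝ
    rw [div_eq_div_iff (by positivity) (by positivity)]
    linear_combination 2 * (q : ℝ) ^ 2 * hcountℝ
end

section
/- Let F be a finite field with q ≥ 3 elements, let l ≥ 0 be an integer, and let d = (q−1)·q^l. Then there exists an F-linear subspace C of F^d such that: (i) |C| = q^{l+2}; (ii) for all distinct coordinates i ≠ j and all a, b ∈ F, the number of x ∈ C with x_i = a and x_j = b equals q^l (i.e. C is pairwise independent); and (iii) the number of x ∈ C with x_i ≠ 1 for every coordinate i is at least (q² − q + 2)/2. In particular C stays in the (q−1)-element subset F∖{1} with probability at least (1/3)·(q−1)/(d + q − 1). -/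
/-!
The code is the image of `(t, s, w) ↦ (α t + α² s + β ⬝ᵥ w)_(α, β)`. For two distinct coordinates
the pair of evaluations is a surjective linear map onto `F²` (solve a Vandermonde system if the
`α`'s differ, use `w` otherwise), so every fibre is a coset of a kernel of size `q^l`.

The codeword of `(t, s, 0)` avoids `1` iff `α t + α² s ≠ 1` for all `α`, i.e. iff `X² - t X - s`
has no nonzero root `β = α⁻¹`. The pairs `(t, s)` for which it has one are `(β + γ, -β γ)` for a
multiset `{β, γ} ≠ {0, 0}`, so there are fewer than `q (q + 1) / 2` of them, which leaves at least
`(q² - q + 2) / 2` good pairs.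
-/

theorem AddMonoidHom.ncard_fiber_mul_card {G M : Type*} [AddGroup G] [Finite G] [AddGroup M]
    (f : G →+ M) (hf : Function.Surjective f) (m : M) :
    {g | f g = m}.ncard * Nat.card M = Nat.card G := by
  obtain ⟨g₀, rfl⟩ := hf m
  have hfiber : {g | f g = f g₀} = (g₀ + ·) '' (f.ker : Set G) := by
    ext g
    refine ⟨fun hg => ⟨-g₀ + g, ?_, by simp⟩, ?_⟩
    · simp [AddMonoidHom.mem_ker, hg.symm]
    · rintro ⟨k, hk, rfl⟩
      simp_all [AddMonoidHom.mem_ker]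
  rw [hfiber, Set.ncard_image_of_injective _ (add_right_injective g₀), ← Nat.card_coe_set_eq,
    ← f.ker.card_mul_index, AddSubgroup.index_ker, AddMonoidHom.range_eq_top.mpr hf,
    AddSubgroup.card_top, SetLike.coe_sort_coe]

theorem AddSubgroup.ncard_eval_pair_mul_card {A D : Type*} [AddGroup A] (C : AddSubgroup (D → A))
    [Finite C] {i j : D} (hsurj : ∀ a b, ∃ x ∈ C, x i = a ∧ x j = b) (a b : A) :
    {x | x ∈ C ∧ x i = a ∧ x j = b}.ncard * Nat.card A ^ 2 = Nat.card C := by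
  let ψ : C →+ A × A :=
    ((Pi.evalAddMonoidHom _ i).prod (Pi.evalAddMonoidHom _ j)).comp C.subtype
  have hψ : Function.Surjective ψ := fun ⟨u, v⟩ => by
    obtain ⟨x, hx, rfl, rfl⟩ := hsurj u v
    exact ⟨⟨x, hx⟩, rfl⟩
  have hset : {x | x ∈ C ∧ x i = a ∧ x j = b} = Subtype.val '' {y : C | ψ y = (a, b)} := by
    ext x
    simp [ψ, and_comm]
  rw [hset, Set.ncard_image_of_injective _ Subtype.val_injective, sq, ← Nat.card_prod,
    ψ.ncard_fiber_mul_card hψ]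

theorem one_third_mul_div_le_div_pow {q G : ℝ} (hq : 1 < q) (n : ℕ) (hG : q ^ 2 + 2 ≤ 2 * G + q) :
    1 / 3 * (q - 1) / ((q - 1) * q ^ n + q - 1) ≤ G / q ^ (n + 2) := by
  have hqn : 1 ≤ q ^ n := one_le_pow₀ hq.le
  have hlhs : 1 / 3 * (q - 1) / ((q - 1) * q ^ n + q - 1) = 1 / (3 * (q ^ n + 1)) := by
    rw [show (q - 1) * q ^ n + q - 1 = (q - 1) * (q ^ n + 1) by ring]
    have : q - 1 ≠ 0 := by linarith
    field_simp
  rw [hlhs, div_le_div_iff₀ (by positivity) (by positivity), pow_add]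
  nlinarith [sq_nonneg (2 * q - 3)]

section RootCount

variable {F : Type*} [Field F] [Fintype F]

theorem two_mul_ncard_exists_root_add_two_le :
    2 * {p : F × F | ∃ α, α * p.1 + α ^ 2 * p.2 = 1}.ncard + 2 ≤
      Fintype.card F * (Fintype.card F + 1) := by
  set g : Sym2 F → F × F :=
    Sym2.lift ⟨fun β γ => (β + γ, -(β * γ)), fun β γ => by simp only [add_comm, mul_comm]⟩
  have hsub : {p : F × F | ∃ α, α * p.1 + α ^ 2 * p.2 = 1} ⊆ g '' (Set.univ \ {s(0, 0)}) := by
    rintro ⟨t, s⟩ ⟨α, hα⟩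
    have hα0 : α ≠ 0 := by rintro rfl; simp at hα
    refine ⟨s(α⁻¹, t - α⁻¹), by simp [hα0], ?_⟩
    simp only [g, Sym2.lift_mk, Prod.mk.injEq, add_sub_cancel, true_and]
    field_simp
    linear_combination -hα
  have hcard : (Set.univ \ {s((0 : F), 0)}).ncard + 1 = (Fintype.card F + 1).choose 2 := by
    rw [Set.ncard_sdiff_singleton_add_one (Set.mem_univ _), Set.ncard_univ,
      Nat.card_eq_fintype_card, Sym2.card]
  have hchoose : 2 * (Fintype.card F + 1).choose 2 = Fintype.card F * (Fintype.card F + 1) := by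
    rw [Nat.choose_two_right, Nat.add_sub_cancel, mul_comm (Fintype.card F + 1),
      Nat.mul_div_cancel' (Nat.even_mul_succ_self _).two_dvd]
  have := (Set.ncard_le_ncard hsub).trans (Set.ncard_image_le (Set.toFinite _))
  omega

theorem card_sq_add_two_le_two_mul_ncard_forall_ne_one_add_card :
    Fintype.card F ^ 2 + 2 ≤
      2 * {p : F × F | ∀ α, α * p.1 + α ^ 2 * p.2 ≠ 1}.ncard + Fintype.card F := by
  have hsplit := Set.ncard_add_ncard_compl {p : F × F | ∃ α, α * p.1 + α ^ 2 * p.2 = 1}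
  have hcompl : {p : F × F | ∃ α, α * p.1 + α ^ 2 * p.2 = 1}ᶜ =
      {p : F × F | ∀ α, α * p.1 + α ^ 2 * p.2 ≠ 1} := by
    ext; simp
  rw [hcompl, Nat.card_eq_fintype_card, Fintype.card_prod] at hsplit
  have := two_mul_ncard_exists_root_add_two_le (F := F)
  linarith

end RootCount

section QuadraticCode

variable {F : Type*} [Field F] {ι D : Type*} [Fintype ι]

def quadraticCode (e : D ≃ Fˣ × (ι → F)) : (F × F × (ι → F)) →ₗ[F] (D → F) where
  toFun v i := (e i).1 * v.1 + ((e i).1 : F) ^ 2 * v.2.1 + (e i).2 ⬝ᵥ v.2.2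
  map_add' u v := by
    ext i
    simp only [Prod.fst_add, Prod.snd_add, Pi.add_apply, dotProduct_add]
    ring
  map_smul' c v := by
    ext i
    simp only [Prod.smul_fst, Prod.smul_snd, Pi.smul_apply, dotProduct_smul, smul_eq_mul,
      RingHom.id_apply]
    ring

theorem exists_mul_add_sq_mul_eq_pair {α α' : F} (hα : α ≠ 0) (hα' : α' ≠ 0) (hne : α ≠ α')
    (a b : F) : ∃ t s, α * t + α ^ 2 * s = a ∧ α' * t + α' ^ 2 * s = b := by
  have hsub : α' - α ≠ 0 := sub_ne_zero.mpr hne.symm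
  refine ⟨(α' ^ 2 * a - α ^ 2 * b) / (α * α' * (α' - α)),
    (α * b - α' * a) / (α * α' * (α' - α)), ?_, ?_⟩ <;>
  · field_simp
    ring

theorem exists_dotProduct_eq {u : ι → F} (hu : u ≠ 0) (c : F) : ∃ w, u ⬝ᵥ w = c := by
  classical
  obtain ⟨k, hk⟩ := Function.ne_iff.mp hu
  exact ⟨Pi.single k (c / u k), by rw [dotProduct_single, mul_div_cancel₀ _ hk]⟩

variable (e : D ≃ Fˣ × (ι → F))

@[simp]
theorem quadraticCode_apply (v : F × F × (ι → F)) (i : D) :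
    quadraticCode e v i = (e i).1 * v.1 + ((e i).1 : F) ^ 2 * v.2.1 + (e i).2 ⬝ᵥ v.2.2 :=
  rfl

theorem quadraticCode_injective [Nontrivial Fˣ] : Function.Injective (quadraticCode e) := by
  classical
  rw [← LinearMap.ker_eq_bot, LinearMap.ker_eq_bot']
  rintro ⟨t, s, w⟩ hv
  have hcoord : ∀ (α : Fˣ) (β : ι → F), (α : F) * t + (α : F) ^ 2 * s + β ⬝ᵥ w = 0 := by
    intro α β
    simpa using congrFun hv (e.symm (α, β))
  have hline : ∀ α : Fˣ, t + α * s = 0 := fun α => by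
    have := hcoord α 0
    rw [zero_dotProduct, add_zero, sq, mul_assoc, ← mul_add] at this
    exact (mul_eq_zero.mp this).resolve_left α.ne_zero
  obtain ⟨a, b, hab⟩ := exists_pair_ne Fˣ
  have hs : s = 0 := by
    have : ((a : F) - b) * s = 0 := by linear_combination hline a - hline b
    exact (mul_eq_zero.mp this).resolve_left (sub_ne_zero.mpr (Units.val_injective.ne hab))
  have ht : t = 0 := by simpa [hs] using hline a
  have hw : w = 0 := funext fun k => by simpa [hs, ht] using hcoord a (Pi.single k 1)
  simp [hs, ht, hw]

theorem exists_quadraticCode_apply_eq_pair {i j : D} (hij : i ≠ j) (a b : F) :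
    ∃ v, quadraticCode e v i = a ∧ quadraticCode e v j = b := by
  simp only [quadraticCode_apply]
  obtain ⟨⟨α, β⟩, ⟨α', β'⟩, hne, hi, hj⟩ : ∃ x y, x ≠ y ∧ e i = x ∧ e j = y :=
    ⟨_, _, e.injective.ne hij, rfl, rfl⟩
  rw [hi, hj]
  by_cases hαα' : α = α'
  · subst hαα'
    obtain ⟨w, hw⟩ := exists_dotProduct_eq (sub_ne_zero.mpr (by simpa using hne)) (a - b)
    rw [sub_dotProduct] at hw
    refine ⟨((a - β ⬝ᵥ w) / α, 0, w), ?_, ?_⟩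
    · field_simp
      ring
    · field_simp
      linear_combination -hw
  · obtain ⟨t, s, h₁, h₂⟩ := exists_mul_add_sq_mul_eq_pair α.ne_zero α'.ne_zero
      (Units.val_injective.ne hαα') a b
    exact ⟨(t, s, 0), by simpa using h₁, by simpa using h₂⟩

theorem ncard_forall_ne_one_le_ncard_range_quadraticCode [Finite F] [Nontrivial Fˣ] :
    {p : F × F | ∀ α, α * p.1 + α ^ 2 * p.2 ≠ 1}.ncard ≤
      {x | x ∈ LinearMap.range (quadraticCode e) ∧ ∀ i, x i ≠ 1}.ncard := by
  refine Set.ncard_le_ncard_of_injOn (fun p => quadraticCode e (p.1, p.2, 0)) ?_ ?_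
    ((Set.finite_range (quadraticCode e)).subset fun x hx => hx.1)
  · intro p hp
    exact ⟨LinearMap.mem_range_self _ _, fun i => by simpa using hp (e i).1⟩
  · intro p _ p' _ h
    simpa [Prod.ext_iff] using quadraticCode_injective e h

end QuadraticCode

/-- For `q ≥ 3` and `d = (q-1)·q^l` there is a pairwise independent linear subspace
`C ⊆ F^d` of size `q^(l+2)` such that at least `(q² - q + 2)/2` codewords avoid the
value `1` in every coordinate; in particular `C` stays in the `(q-1)`-element set
`F∖{1}` with probability at least `(1/3)·(q-1)/(d+q-1)`. -/
theorem stmt_5 (F : Type) [Field F] [Fintype F] (q : ℕ) (hq : Fintype.card F = q)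
    (hq3 : 3 ≤ q) (l : ℕ) (d : ℕ) (hd : d = (q - 1) * q ^ l) :
    ∃ C : Submodule F (Fin d → F),
      Nat.card C = q ^ (l + 2) ∧
      (∀ i j : Fin d, i ≠ j → ∀ a b : F,
          {x : Fin d → F | x ∈ C ∧ x i = a ∧ x j = b}.ncard = q ^ l) ∧
      (q ^ 2 - q + 2) / 2 ≤ {x : Fin d → F | x ∈ C ∧ ∀ i, x i ≠ 1}.ncard ∧
      ((1 : ℝ) / 3) * ((q : ℝ) - 1) / ((d : ℝ) + (q : ℝ) - 1) ≤
        ({x : Fin d → F | x ∈ C ∧ ∀ i, x i ≠ 1}.ncard : ℝ) / (Nat.card C : ℝ) := by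
  classical
  obtain ⟨e⟩ : Nonempty (Fin d ≃ Fˣ × (Fin l → F)) := by
    refine ⟨Fintype.equivOfCardEq ?_⟩
    simp [Fintype.card_units, hq, hd]
  have : Nontrivial Fˣ := Fintype.one_lt_card_iff_nontrivial.mp (by
    rw [Fintype.card_units, hq]; omega)
  set C := LinearMap.range (quadraticCode e)
  have hcard : Nat.card C = q ^ (l + 2) := by
    rw [← Nat.card_congr (LinearEquiv.ofInjective _ (quadraticCode_injective e)).toEquiv]
    simp [hq]
    ring
  have hgood : q ^ 2 + 2 ≤ 2 * {x : Fin d → F | x ∈ C ∧ ∀ i, x i ≠ 1}.ncard + q := by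
    have : _ ≤ {x : Fin d → F | x ∈ C ∧ ∀ i, x i ≠ 1}.ncard :=
      ncard_forall_ne_one_le_ncard_range_quadraticCode e
    have := hq ▸ card_sq_add_two_le_two_mul_ncard_forall_ne_one_add_card (F := F)
    omega
  refine ⟨C, hcard, fun i j hij a b => ?_, by have := Nat.le_self_pow two_ne_zero q; omega, ?_⟩
  · have hsurj : ∀ a b, ∃ x ∈ C, x i = a ∧ x j = b := fun a b =>
      let ⟨v, hv⟩ := exists_quadraticCode_apply_eq_pair e hij a b
      ⟨_, LinearMap.mem_range_self _ v, hv⟩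
    have hfiber : {x : Fin d → F | x ∈ C ∧ x i = a ∧ x j = b}.ncard * q ^ 2 = q ^ l * q ^ 2 := by
      rw [← pow_add, ← hcard, ← hq, ← Nat.card_eq_fintype_card]
      exact C.toAddSubgroup.ncard_eval_pair_mul_card hsurj a b
    exact Nat.eq_of_mul_eq_mul_right (by positivity) hfiber
  · have hd' : (d : ℝ) = ((q : ℝ) - 1) * (q : ℝ) ^ l := by
      rw [hd, Nat.cast_mul, Nat.cast_sub (by omega), Nat.cast_pow, Nat.cast_one]
    rw [hcard, hd', Nat.cast_pow]
    exact one_third_mul_div_le_div_pow (by exact_mod_cast (by omega : 1 < q)) l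
      (by exact_mod_cast hgood)
end

section
/- For every integer d ≥ 3 and every real c ≥ 1 there exist a constant β > 0 and an integer N₀ such that for all N ≥ N₀, setting M = ⌈cN⌉, the following holds: under the uniform probability measure on functions f : [M] → ([N])^d, the probability that there exists a nonempty subset T ⊆ [M] with |T| ≤ βN whose neighbor set {i ∈ [N] : f(j)(t) = i for some j ∈ T and some t ∈ [d]} has fewer than (d − 7/5)·|T| elements is at most 1/2. (In other words, with probability at least 1/2 the random bipartite graph is a (≤ βN, d − 1.4)-expander from [M] to [N].) -/
/-!
Union bound over the size `k` of `T`. If `|Γ(T)| < a k` with `a = d - 7/5`, then `f` maps `T`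
into some `S ⊆ [N]` with `|S| = m = ⌊a k⌋`, an event of probability `(m/N)^{dk}`. By
`binom(n, k) ≤ (e n / k)^k` the contribution of size `k` is at most
`e^{k+m} (M m / (k N))^k (m/N)^{dk-k-m} ≤ (e^{1+a} · 2ac · δ)^k`,
since `M m / (k N) ≤ 2ac`, `dk - k - m ≥ k/3`, and `m/N ≤ δ³` once `k ≤ δ³N/a`.
Taking `δ = 1 / (4 e^{1+a} · 2ac + 1)` makes the sum over `k ≥ 1` at most `1/3`.
-/

open Finset Real

theorem Nat.choose_le_div_pow_mul_exp (n k : ℕ) :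
    (n.choose k : ℝ) ≤ ((n : ℝ) / k) ^ k * exp k := by
  rcases k.eq_zero_or_pos with rfl | hk
  · simp
  calc (n.choose k : ℝ) ≤ (n : ℝ) ^ k / k.factorial := Nat.choose_le_pow_div k n
    _ = ((n : ℝ) / k) ^ k * ((k : ℝ) ^ k / k.factorial) := by
        field_simp; rw [div_pow]; field_simp
    _ ≤ ((n : ℝ) / k) ^ k * exp k := by gcongr; exact pow_div_factorial_le_exp _ k.cast_nonneg k

theorem Nat.ceil_mul_le_two_mul {c x : ℝ} (hc : 1 ≤ c) (hx : 1 ≤ x) :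
    (⌈c * x⌉₊ : ℝ) ≤ 2 * c * x := by
  have := Nat.ceil_lt_add_one (by positivity : 0 ≤ c * x)
  nlinarith

theorem geom_sum_Icc_one_le_div {r : ℝ} (h0 : 0 ≤ r) (h1 : r < 1) (K : ℕ) :
    ∑ k ∈ Icc 1 K, r ^ k ≤ r / (1 - r) := by
  simpa [← Ico_add_one_right_eq_Icc] using geom_sum_Ico_le_of_lt_one h0 h1 (m := 1) (n := K + 1)

theorem choose_mul_choose_mul_div_pow_le {M N k m d : ℕ} {a b δ : ℝ} (hk : 0 < k) (hN : 0 < N)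
    (hδ0 : 0 ≤ δ) (hδ1 : δ ≤ 1) (hmk : (m : ℝ) ≤ a * k) (hkN : a * k ≤ δ ^ 3 * N)
    (hMN : (M : ℝ) ≤ b * N) (hd : a + 4 / 3 ≤ d) :
    (M.choose k : ℝ) * N.choose m * ((m : ℝ) / N) ^ (d * k) ≤ (exp (1 + a) * (a * b) * δ) ^ k := by
  set x := (m : ℝ) / N
  have hN' : (0 : ℝ) < N := by exact_mod_cast hN
  have hxδ : x ≤ δ ^ 3 := by rw [div_le_iff₀ hN']; linarith
  have hdk : 3 * m + 4 * k ≤ 3 * (d * k) := by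
    have : (3 * m + 4 * k : ℝ) ≤ 3 * (d * k) := by nlinarith
    exact_mod_cast this
  obtain ⟨e, hsplit, he⟩ : ∃ e, d * k = k + m + e ∧ k ≤ 3 * e :=
    ⟨d * k - k - m, by omega, by omega⟩
  have hMx : M / k * x ≤ a * b := by
    rw [div_mul_div_comm, div_le_iff₀ (by positivity)]
    nlinarith
  have hab : 0 ≤ a * b := (by positivity : (0 : ℝ) ≤ M / k * x).trans hMx
  have hNx : N / m * x ≤ 1 := by
    rw [div_mul_div_comm, mul_comm]
    exact div_self_le_one _
  have hexp : exp (k + m) ≤ exp (1 + a) ^ k := by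
    rw [← exp_nat_mul, exp_le_exp]
    nlinarith
  have hxe : x ^ e ≤ δ ^ k := calc
    x ^ e ≤ (δ ^ 3) ^ e := by gcongr
    _ ≤ δ ^ k := by rw [← pow_mul]; exact pow_le_pow_of_le_one hδ0 hδ1 he
  calc (M.choose k : ℝ) * N.choose m * x ^ (d * k)
      ≤ ((M / k) ^ k * exp k) * ((N / m) ^ m * exp m) * x ^ (d * k) := by
        gcongr <;> exact Nat.choose_le_div_pow_mul_exp _ _
    _ = (M / k * x) ^ k * (N / m * x) ^ m * exp (k + m) * x ^ e := by
        rw [hsplit, exp_add]; ring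
    _ ≤ (a * b) ^ k * 1 ^ m * exp (1 + a) ^ k * δ ^ k := by gcongr
    _ = (exp (1 + a) * (a * b) * δ) ^ k := by ring

section RandomFunctions

variable {α ι β : Type*} [Fintype ι] [Fintype β]

theorem exists_card_eq_forall_mem_of_ncard_le {f : α → ι → β} {T : Finset α} {m : ℕ}
    (hΓ : {i | ∃ j ∈ T, ∃ t, f j t = i}.ncard ≤ m) (hm : m ≤ Fintype.card β) :
    ∃ S : Finset β, #S = m ∧ ∀ j ∈ T, ∀ t, f j t ∈ S := by
  classical
  set Γ := T.biUnion fun j => univ.image (f j)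
  have hΓ' : #Γ ≤ m := by
    convert hΓ
    rw [← Set.ncard_coe_finset]
    congr 1
    ext i
    simp [Γ]
  obtain ⟨S, hΓS, -, hS⟩ := exists_subsuperset_card_eq (subset_univ Γ) hΓ' (by simpa using hm)
  exact ⟨S, hS, fun j hj t => hΓS (mem_biUnion.2 ⟨j, hj, mem_image_of_mem _ (mem_univ t)⟩)⟩

variable [Fintype α] [DecidableEq α] [DecidableEq ι] [Nonempty β]

theorem ncard_setOf_forall_mem_div_card (T : Finset α) (S : Finset β) :
    ({f : α → ι → β | ∀ j ∈ T, ∀ t, f j t ∈ S}.ncard : ℝ) / Fintype.card (α → ι → β) =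
      ((#S : ℝ) / Fintype.card β) ^ (Fintype.card ι * #T) := by
  have hset : {f : α → ι → β | ∀ j ∈ T, ∀ t, f j t ∈ S} =
      ↑(Fintype.piFinset fun j => if j ∈ T then Fintype.piFinset fun _ : ι => S else univ) := by
    ext f
    simp only [Set.mem_ofPred_eq, Fintype.coe_piFinset, Set.mem_pi]
    refine forall_congr' fun j => ?_
    split_ifs with hj <;> simp [hj]
  have hfactor (j : α) :
      (#(if j ∈ T then Fintype.piFinset fun _ : ι => S else univ) : ℝ) /
          (Fintype.card β : ℝ) ^ Fintype.card ι =
        if j ∈ T then ((#S : ℝ) / Fintype.card β) ^ Fintype.card ι else 1 := by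
    split_ifs
    · simp [div_pow]
    · simp
  rw [hset, Set.ncard_coe_finset, Fintype.card_piFinset, Fintype.card_fun, Fintype.card_fun,
    ← card_univ (α := α), Nat.cast_prod, Nat.cast_pow, Nat.cast_pow, ← prod_const,
    ← prod_div_distrib, prod_congr rfl fun j _ => hfactor j, prod_ite_mem, univ_inter, prod_const,
    pow_mul]

theorem ncard_exists_ncard_neighbors_le_div_card_le (K : ℕ) (m : ℕ → ℕ)
    (hm : ∀ k ≤ K, m k ≤ Fintype.card β) :
    ({f : α → ι → β | ∃ T : Finset α, T.Nonempty ∧ #T ≤ K ∧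
        {i | ∃ j ∈ T, ∃ t, f j t = i}.ncard ≤ m #T}.ncard : ℝ) / Fintype.card (α → ι → β) ≤
      ∑ k ∈ Icc 1 K, ((Fintype.card α).choose k * (Fintype.card β).choose (m k) : ℝ) *
        ((m k : ℝ) / Fintype.card β) ^ (Fintype.card ι * k) := by
  let E (T : Finset α) (S : Finset β) : Set (α → ι → β) := {f | ∀ j ∈ T, ∀ t, f j t ∈ S}
  have hcover : {f : α → ι → β | ∃ T : Finset α, T.Nonempty ∧ #T ≤ K ∧
        {i | ∃ j ∈ T, ∃ t, f j t = i}.ncard ≤ m #T} ⊆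
      ⋃ k ∈ Icc 1 K, ⋃ T ∈ powersetCard k univ, ⋃ S ∈ powersetCard (m k) univ, E T S := by
    rintro f ⟨T, hT, hTK, hΓ⟩
    obtain ⟨S, hS, hfS⟩ := exists_card_eq_forall_mem_of_ncard_le hΓ (hm _ hTK)
    simp only [Set.mem_iUnion]
    exact ⟨#T, mem_Icc.2 ⟨hT.card_pos, hTK⟩, T, mem_powersetCard_univ.2 rfl, S,
      mem_powersetCard_univ.2 hS, hfS⟩
  have hunion : (⋃ k ∈ Icc 1 K, ⋃ T ∈ powersetCard k univ, ⋃ S ∈ powersetCard (m k) univ,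
      E T S).ncard ≤ ∑ k ∈ Icc 1 K, ∑ T ∈ powersetCard k univ, ∑ S ∈ powersetCard (m k) univ,
        (E T S).ncard := by
    refine (set_ncard_biUnion_le _ _).trans (sum_le_sum fun k _ => ?_)
    refine (set_ncard_biUnion_le _ _).trans (sum_le_sum fun T _ => ?_)
    exact set_ncard_biUnion_le _ _
  have hterm (k : ℕ) (T : Finset α) (hT : T ∈ powersetCard k univ) (S : Finset β)
      (hS : S ∈ powersetCard (m k) univ) :
      ((E T S).ncard : ℝ) / Fintype.card (α → ι → β) =
        ((m k : ℝ) / Fintype.card β) ^ (Fintype.card ι * k) := by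
    rw [ncard_setOf_forall_mem_div_card, mem_powersetCard_univ.1 hT, mem_powersetCard_univ.1 hS]
  calc _ ≤ (∑ k ∈ Icc 1 K, ∑ T ∈ powersetCard k univ, ∑ S ∈ powersetCard (m k) univ,
          ((E T S).ncard : ℝ)) / Fintype.card (α → ι → β) := by
        gcongr
        exact_mod_cast (Set.ncard_le_ncard hcover (Set.toFinite _)).trans hunion
    _ = _ := by
        simp only [sum_div]
        refine sum_congr rfl fun k _ => ?_
        rw [sum_congr rfl fun T hT => sum_congr rfl fun S hS => hterm k T hT S hS]
        simp [card_powersetCard, mul_assoc]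

theorem ncard_exists_ncard_neighbors_lt_div_card_le {a b δ : ℝ} (ha : 0 < a) (hδ0 : 0 ≤ δ)
    (hδ1 : δ ≤ 1) (hαβ : (Fintype.card α : ℝ) ≤ b * Fintype.card β)
    (hι : a + 4 / 3 ≤ Fintype.card ι) :
    ({f : α → ι → β | ∃ T : Finset α, T.Nonempty ∧ (#T : ℝ) ≤ δ ^ 3 / a * Fintype.card β ∧
        ({i | ∃ j ∈ T, ∃ t, f j t = i}.ncard : ℝ) < a * #T}.ncard : ℝ) /
        Fintype.card (α → ι → β) ≤
      ∑ k ∈ Icc 1 ⌊δ ^ 3 / a * Fintype.card β⌋₊, (exp (1 + a) * (a * b) * δ) ^ k := by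
  set K := ⌊δ ^ 3 / a * Fintype.card β⌋₊
  have hak (k : ℕ) (hk : k ≤ K) : a * k ≤ δ ^ 3 * Fintype.card β := calc
    a * k ≤ a * (δ ^ 3 / a * Fintype.card β) := by
      gcongr
      exact (Nat.cast_le.2 hk).trans (Nat.floor_le (by positivity))
    _ = δ ^ 3 * Fintype.card β := by field_simp
  have hsub : {f : α → ι → β | ∃ T : Finset α, T.Nonempty ∧
        (#T : ℝ) ≤ δ ^ 3 / a * Fintype.card β ∧
        ({i | ∃ j ∈ T, ∃ t, f j t = i}.ncard : ℝ) < a * #T} ⊆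
      {f | ∃ T : Finset α, T.Nonempty ∧ #T ≤ K ∧
        {i | ∃ j ∈ T, ∃ t, f j t = i}.ncard ≤ ⌊a * #T⌋₊} := by
    rintro f ⟨T, hT, hTK, hΓ⟩
    exact ⟨T, hT, Nat.le_floor hTK, Nat.le_floor hΓ.le⟩
  have hm (k : ℕ) (hk : k ≤ K) : ⌊a * k⌋₊ ≤ Fintype.card β :=
    Nat.floor_le_of_le (by nlinarith [hak k hk, pow_le_one₀ hδ0 hδ1 (n := 3)])
  calc _ ≤ _ := by gcongr; exact Set.toFinite _
    _ ≤ _ := ncard_exists_ncard_neighbors_le_div_card_le K _ hm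
    _ ≤ _ := by
        gcongr with k hk
        obtain ⟨hk1, hkK⟩ := mem_Icc.1 hk
        exact choose_mul_choose_mul_div_pow_le hk1 Fintype.card_pos hδ0 hδ1
          (Nat.floor_le (by positivity)) (hak k hkK) hαβ hι

end RandomFunctions

/-- For every `d ≥ 3` and `c ≥ 1` there are `β > 0` and `N₀` such that for `N ≥ N₀`
and `M = ⌈cN⌉`, with probability at least `1/2` (over each right vertex picking `d`
uniformly random left neighbors with replacement) every nonempty `T ⊆ [M]` with
`|T| ≤ βN` has at least `(d - 7/5)|T|` distinct neighbors in `[N]`. -/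
theorem stmt_6 : ∀ d : ℕ, 3 ≤ d → ∀ c : ℝ, 1 ≤ c →
    ∃ β : ℝ, 0 < β ∧ ∃ N₀ : ℕ, ∀ N : ℕ, N₀ ≤ N → ∀ M : ℕ, M = ⌈c * (N : ℝ)⌉₊ →
      (({f : Fin M → Fin d → Fin N | ∃ T : Finset (Fin M), T.Nonempty ∧
          (T.card : ℝ) ≤ β * N ∧
          ({i : Fin N | ∃ j ∈ T, ∃ t : Fin d, f j t = i}.ncard : ℝ) <
            ((d : ℝ) - 7 / 5) * T.card}.ncard : ℝ) /
        (Fintype.card (Fin M → Fin d → Fin N) : ℝ)) ≤ 1 / 2 := by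
  intro d hd c hc
  set a : ℝ := d - 7 / 5 with ha
  have ha0 : 0 < a := by
    have : (3 : ℝ) ≤ d := by exact_mod_cast hd
    linarith
  set r := exp (1 + a) * (a * (2 * c))
  set δ := 1 / (4 * r + 1)
  have hδ1 : δ ≤ 1 := by rw [div_le_one (by positivity)]; linarith [show 0 < r by positivity]
  have hrδ : r * δ ≤ 1 / 4 := by
    rw [mul_one_div, div_le_div_iff₀ (by positivity) (by norm_num)]; linarith
  refine ⟨δ ^ 3 / a, by positivity, 1, fun N hN M hM => ?_⟩
  have : NeZero N := ⟨by omega⟩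
  have hMN : (Fintype.card (Fin M) : ℝ) ≤ 2 * c * Fintype.card (Fin N) := by
    simpa [hM] using Nat.ceil_mul_le_two_mul hc (by exact_mod_cast hN : (1 : ℝ) ≤ N)
  have hbad := ncard_exists_ncard_neighbors_lt_div_card_le (ι := Fin d) ha0 (by positivity) hδ1 hMN
    (by rw [Fintype.card_fin]; linarith)
  simp only [Fintype.card_fin] at hbad
  calc _ ≤ ∑ k ∈ Icc 1 ⌊δ ^ 3 / a * N⌋₊, (r * δ) ^ k := hbad
    _ ≤ r * δ / (1 - r * δ) := geom_sum_Icc_one_le_div (by positivity) (by linarith) _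
    _ ≤ 1 / 2 := by rw [div_le_div_iff₀ (by linarith) (by norm_num)]; linarith
end

section
/- Let G be a bipartite graph on [N] ∪ [M] in which every vertex j ∈ [M] has exactly d ≥ 1 neighbors Γ(j) ⊆ [N]. Let ρ ∈ (0,1) with r = ρN an integer and let Δ ∈ [0,1]. If there exists a subset S ⊆ [N] with |S| = r and |Γ(S)| ≤ (1−Δ)M, then there exist real numbers v_1,…,v_N with |v_i| ≤ 1 for all i, Σ_{i=1}^N v_i = 0, and Σ_{j=1}^M ((1/d)·Σ_{i ∈ Γ(j)} v_i)² ≥ min{(ρ/(1−ρ))², 1}·Δ·M. -/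
/-!
Put `t = ρ / (1 - ρ)` and `c = min t 1`, and take `v = c` off `S` and `v = -c / t` on `S`.
Since `|S| = ρN`, the two parts cancel: `ρN · c/t = (1 - ρ)N · c = |Sᶜ| · c`. Every right
vertex with no neighbour in `S` averages exactly `c`, and by assumption at least `ΔM` right
vertices are such, so the objective is at least `c²ΔM = min(t², 1)·ΔM`.
-/

open Finset

section

variable {ι κ : Type*} [DecidableEq ι]

lemma sum_ite_mem_const [Fintype ι] (S : Finset ι) (a b : ℝ) :
    ∑ i, (if i ∈ S then a else b) = #S * a + (Fintype.card ι - #S) * b := by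
  rw [sum_ite, filter_mem_eq_inter, univ_inter,
    filter_notMem_eq_sdiff]
  simp [card_univ_sdiff, Nat.cast_sub (card_le_univ S)]

lemma card_filter_disjoint_eq [Fintype κ] (Γ : κ → Finset ι) (S : Finset ι) :
    (#{j | Disjoint S (Γ j)} : ℝ) = Fintype.card κ - {j : κ | ∃ i ∈ S, i ∈ Γ j}.ncard := by
  have hmeets : univ.filter (fun j => ∃ i ∈ S, i ∈ Γ j) =
      univ.filter (fun j => ¬ Disjoint S (Γ j)) := by
    ext; simp [not_disjoint_iff]
  rw [Set.ncard_eq_toFinset_card', Set.toFinset_ofPred, hmeets, eq_sub_iff_add_eq]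
  norm_cast
  rw [card_filter_add_card_filter_not, card_univ]

lemma sq_mul_card_filter_disjoint_le_sum_sq_avg [Fintype κ] (Γ : κ → Finset ι) {d : ℕ}
    (hd : d ≠ 0) (hΓ : ∀ j, #(Γ j) = d) (S : Finset ι) {v : ι → ℝ} {c : ℝ}
    (hv : ∀ i ∉ S, v i = c) :
    c ^ 2 * #{j | Disjoint S (Γ j)} ≤ ∑ j, ((1 / (d : ℝ)) * ∑ i ∈ Γ j, v i) ^ 2 := by
  have havg : ∀ j ∈ ({j | Disjoint S (Γ j)} : Finset κ),
      ((1 / (d : ℝ)) * ∑ i ∈ Γ j, v i) ^ 2 = c ^ 2 := by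
    intro j hj
    have hconst : ∀ i ∈ Γ j, v i = c := fun i hi =>
      hv i (disjoint_right.1 (mem_filter.1 hj).2 hi)
    rw [sum_congr rfl hconst, sum_const, hΓ, nsmul_eq_mul]
    field_simp
  calc c ^ 2 * #{j | Disjoint S (Γ j)}
      = ∑ j ∈ ({j | Disjoint S (Γ j)} : Finset κ), ((1 / (d : ℝ)) * ∑ i ∈ Γ j, v i) ^ 2 := by
        rw [sum_congr rfl havg, sum_const, nsmul_eq_mul, mul_comm]
    _ ≤ ∑ j, ((1 / (d : ℝ)) * ∑ i ∈ Γ j, v i) ^ 2 :=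
        sum_le_sum_of_subset_of_nonneg (subset_univ _) fun _ _ _ => sq_nonneg _

end

theorem stmt_7_general (N M d : ℕ) (hd : 1 ≤ d) (Γ : Fin M → Finset (Fin N))
    (hΓ : ∀ j, (Γ j).card = d) (ρ : ℝ) (hρ0 : 0 < ρ) (hρ1 : ρ < 1)
    (r : ℕ) (hr : (r : ℝ) = ρ * N) (Δ : ℝ)
    (S : Finset (Fin N)) (hS : S.card = r)
    (hexp : ({j : Fin M | ∃ i ∈ S, i ∈ Γ j}.ncard : ℝ) ≤ (1 - Δ) * M) :
    ∃ v : Fin N → ℝ, (∀ i, |v i| ≤ 1) ∧ (∑ i, v i = 0) ∧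
      min ((ρ / (1 - ρ)) ^ 2) 1 * Δ * M ≤
        ∑ j, ((1 / (d : ℝ)) * ∑ i ∈ Γ j, v i) ^ 2 := by
  set t := ρ / (1 - ρ)
  have ht : 0 < t := div_pos hρ0 (sub_pos.2 hρ1)
  have hc : 0 < min t 1 := lt_min ht one_pos
  refine ⟨fun i => if i ∈ S then -(min t 1 / t) else min t 1, fun i => ?_, ?_, ?_⟩
  · dsimp only
    split_ifs
    · rw [abs_neg, abs_of_pos (div_pos hc ht)]
      exact div_le_one_of_le₀ (min_le_left _ _) ht.le
    · exact (abs_of_pos hc).trans_le (min_le_right _ _)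
  · have : 1 - ρ ≠ 0 := (sub_pos.2 hρ1).ne'
    rw [sum_ite_mem_const, Fintype.card_fin, hS, hr]
    simp only [t]
    field_simp
    ring
  · have hfree : Δ * M ≤ #{j | Disjoint S (Γ j)} := by
      rw [card_filter_disjoint_eq, Fintype.card_fin]
      linarith
    have hmin : min (t ^ 2) 1 = min t 1 ^ 2 := by
      rcases le_total t 1 with h | h
      · simp [h, pow_le_one₀ ht.le h]
      · simp [h, one_le_pow₀ h]
    calc min (t ^ 2) 1 * Δ * M = min t 1 ^ 2 * (Δ * M) := by rw [hmin]; ring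
      _ ≤ min t 1 ^ 2 * #{j | Disjoint S (Γ j)} := by gcongr
      _ ≤ _ := sq_mul_card_filter_disjoint_le_sum_sq_avg Γ (by omega) hΓ S fun i hi => if_neg hi

/-- SDP value lower bound: if some `ρN`-subset `S ⊆ [N]` has neighbor set of size at most
`(1-Δ)M` in a bipartite graph with right degree `d`, then there are reals `v_i` with
`|v_i| ≤ 1`, `Σ v_i = 0`, and `Σ_j ((1/d)Σ_{i∈Γ(j)} v_i)² ≥ min{(ρ/(1-ρ))², 1}·Δ·M`. -/
theorem stmt_7 (N M d : ℕ) (hd : 1 ≤ d) (Γ : Fin M → Finset (Fin N))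
    (hΓ : ∀ j, (Γ j).card = d) (ρ : ℝ) (hρ0 : 0 < ρ) (hρ1 : ρ < 1)
    (r : ℕ) (hr : (r : ℝ) = ρ * N) (Δ : ℝ) (hΔ0 : 0 ≤ Δ) (hΔ1 : Δ ≤ 1)
    (S : Finset (Fin N)) (hS : S.card = r)
    (hexp : ({j : Fin M | ∃ i ∈ S, i ∈ Γ j}.ncard : ℝ) ≤ (1 - Δ) * M) :
    ∃ v : Fin N → ℝ, (∀ i, |v i| ≤ 1) ∧ (∑ i, v i = 0) ∧
      min ((ρ / (1 - ρ)) ^ 2) 1 * Δ * M ≤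
        ∑ j, ((1 / (d : ℝ)) * ∑ i ∈ Γ j, v i) ^ 2 :=
  stmt_7_general N M d hd Γ hΓ ρ hρ0 hρ1 r hr Δ S hS hexp
end

section
/- There exist universal constants C₁ > 0 and c > 0 with the following property. Let d ≥ 2 be an integer, let G be a bipartite graph on [N] ∪ [M] in which every j ∈ [M] has exactly d neighbors Γ(j) ⊆ [N], let H be a finite-dimensional real inner product space, and let v_1,…,v_N ∈ H satisfy ‖v_i‖ ≤ 1 for all i and Σ_{i=1}^N v_i = 0. If δ := Σ_{j=1}^M ‖(1/d)·Σ_{i∈Γ(j)} v_i‖² ≥ M/d, then there exist real numbers z_1,…,z_N ∈ [−1,1] such that |Σ_{i=1}^N z_i| ≤ C₁·N/d and Σ_{j=1}^M ((1/d)·Σ_{i∈Γ(j)} z_i)² ≥ c·δ/log d (natural logarithm). -/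
/-!
Instead of a Gaussian direction we average over the `2 ^ dim H` directions `g = ∑ ±bₘ` for an
orthonormal basis `(bₘ)` of `H`: the projections `⟪u, g⟫` have second moment `‖u‖²` and, by
`cosh x ≤ exp (x² / 2)`, the moment generating function of a centred Gaussian of variance `‖u‖²`;
nothing else about the Gaussian is used.

With `τ = √(24 log d)` put `zᵢ = clip (⟪vᵢ, g⟫ / τ)` and let `eᵢ = zᵢ - ⟪vᵢ, g⟫ / τ` be the
truncation error. The subgaussian tail gives `𝔼 |eᵢ|, 𝔼 eᵢ² ≤ 2 exp (-τ² / 2) = 2 d⁻¹²`. Since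
`∑ vᵢ = 0`, `|∑ zᵢ| ≤ ∑ |eᵢ|`; and `(y + f)² ≥ y² / 2 - f²` with Cauchy–Schwarz shows that the
scalar objective has mean at least `δ / (2τ²) - 2M d⁻¹²`. As `M ≤ dδ`, the objective minus
`(Md / N) ∑ |eᵢ|` has mean at least `δ / (96 log d)`, and a sample reaching this mean satisfies
both bounds, because the objective never exceeds `M`.
-/

open Finset Real
open scoped BigOperators RealInnerProductSpace

namespace GaussianRounding

def rademacher (b : Bool) : ℝ := if b then 1 else -1

@[simp] lemma rademacher_sq (b : Bool) : rademacher b ^ 2 = 1 := by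
  cases b <;> norm_num [rademacher]

@[simp] lemma expect_rademacher : 𝔼 b, rademacher b = 0 := by
  rw [Fintype.expect_eq_sum_div_card]
  simp [rademacher]

section Cube

variable {ι κ : Type*} [Fintype ι] [DecidableEq ι] [Fintype κ]

lemma expect_pi_prod (F : ι → κ → ℝ) :
    𝔼 x : ι → κ, ∏ i, F i (x i) = ∏ i, 𝔼 y, F i y := by
  simp only [Fintype.expect_eq_sum_div_card, Fintype.card_pi, prod_const, card_univ,
    ← Fintype.prod_sum, prod_div_distrib]
  push_cast
  rfl

lemma expect_rademacher_mul_rademacher (m m' : ι) :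
    𝔼 ε : ι → Bool, rademacher (ε m) * rademacher (ε m') = if m = m' then 1 else 0 := by
  split_ifs with h
  · subst h
    simp [← sq]
  · have factor : ∀ ε : ι → Bool, rademacher (ε m) * rademacher (ε m') =
        ∏ r, (if r = m then rademacher (ε r) else 1) *
          (if r = m' then rademacher (ε r) else 1) := by
      intro ε
      rw [prod_mul_distrib, prod_ite_eq' univ m, prod_ite_eq' univ m']
      simp
    simp only [factor]
    rw [expect_pi_prod (fun r b => (if r = m then rademacher b else 1) *
      (if r = m' then rademacher b else 1))]
    exact prod_eq_zero (mem_univ m) (by simpa [h] using expect_rademacher)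

lemma expect_sq_sum_rademacher_mul (c : ι → ℝ) :
    𝔼 ε : ι → Bool, (∑ m, rademacher (ε m) * c m) ^ 2 = ∑ m, c m ^ 2 := by
  have expand : ∀ ε : ι → Bool, (∑ m, rademacher (ε m) * c m) ^ 2 =
      ∑ m, ∑ m', rademacher (ε m) * rademacher (ε m') * (c m * c m') := by
    intro ε
    rw [sq, sum_mul_sum]
    exact sum_congr rfl fun m _ => sum_congr rfl fun m' _ => by ring
  simp only [expand, expect_sum_comm, ← expect_mul, expect_rademacher_mul_rademacher, ite_mul,
    one_mul, zero_mul, sum_ite_eq, mem_univ, if_true, sq]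

lemma expect_exp_sum_rademacher_mul_le (c : ι → ℝ) (l : ℝ) :
    𝔼 ε : ι → Bool, exp (l * ∑ m, rademacher (ε m) * c m) ≤
      exp (l ^ 2 * (∑ m, c m ^ 2) / 2) := by
  have factor : ∀ ε : ι → Bool, exp (l * ∑ m, rademacher (ε m) * c m) =
      ∏ m, exp (l * (rademacher (ε m) * c m)) := by
    intro ε
    rw [← exp_sum, mul_sum]
  have cosh_bound : ∀ m, 𝔼 b, exp (l * (rademacher b * c m)) ≤ exp ((l * c m) ^ 2 / 2) := by
    intro m
    refine le_trans (le_of_eq ?_) (cosh_le_exp_half_sq (l * c m))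
    rw [Fintype.expect_eq_sum_div_card]
    simp [rademacher, cosh_eq]
  calc 𝔼 ε : ι → Bool, exp (l * ∑ m, rademacher (ε m) * c m)
      = ∏ m, 𝔼 b, exp (l * (rademacher b * c m)) := by
        simp only [factor]
        exact expect_pi_prod (fun m b => exp (l * (rademacher b * c m)))
    _ ≤ ∏ m, exp ((l * c m) ^ 2 / 2) :=
        prod_le_prod (fun m _ => by positivity) fun m _ => cosh_bound m
    _ = exp (l ^ 2 * (∑ m, c m ^ 2) / 2) := by
      rw [← exp_sum, mul_sum, sum_div]
      simp only [mul_pow]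

end Cube

def clip (x : ℝ) : ℝ := max (-1) (min 1 x)

lemma clip_mem_Icc (x : ℝ) : clip x ∈ Set.Icc (-1 : ℝ) 1 :=
  ⟨le_max_left _ _, max_le (by norm_num) (min_le_left _ _)⟩

lemma clip_of_abs_le {x : ℝ} (hx : |x| ≤ 1) : clip x = x := by
  rw [abs_le] at hx
  rw [clip, min_eq_right hx.2, max_eq_right hx.1]

lemma abs_clip_sub_of_one_le_abs {x : ℝ} (hx : 1 ≤ |x|) : |clip x - x| = |x| - 1 := by
  rcases le_total 0 x with h | h
  · rw [abs_of_nonneg h] at hx ⊢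
    rw [clip, min_eq_left hx, max_eq_right (by norm_num), abs_sub_comm,
      abs_of_nonneg (by linarith)]
  · rw [abs_of_nonpos h] at hx ⊢
    rw [clip, min_eq_right (by linarith), max_eq_left (by linarith), abs_of_nonneg (by linarith)]
    ring

lemma le_exp_mul_and_sq_le_exp_mul {L s : ℝ} (hL : 2 ≤ L) (hs : 0 ≤ s) :
    s ≤ exp (L * s) ∧ s ^ 2 ≤ exp (L * s) := by
  have h : (s + 1) ^ 2 ≤ exp (L * s) :=
    calc (s + 1) ^ 2 ≤ exp s ^ 2 := pow_le_pow_left₀ (by linarith) (add_one_le_exp s) 2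
      _ = exp (2 * s) := by rw [← exp_nat_mul]; norm_num
      _ ≤ exp (L * s) := exp_le_exp.mpr (by nlinarith)
  constructor <;> nlinarith

lemma clip_sub_le_exp {L : ℝ} (hL : 2 ≤ L) (x : ℝ) :
    |clip x - x| ≤ exp (L * (|x| - 1)) ∧ (clip x - x) ^ 2 ≤ exp (L * (|x| - 1)) := by
  rcases le_total |x| 1 with hx | hx
  · simp [clip_of_abs_le hx, exp_nonneg]
  · rw [← sq_abs (clip x - x), abs_clip_sub_of_one_le_abs hx]
    exact le_exp_mul_and_sq_le_exp_mul hL (by linarith)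

lemma half_sq_sub_le_sq_mul_sum_add {ι : Type*} (s : Finset ι) (c : ℝ) (y e : ι → ℝ) :
    (c * ∑ i ∈ s, y i) ^ 2 / 2 - c ^ 2 * (#s : ℝ) * ∑ i ∈ s, e i ^ 2 ≤
      (c * ∑ i ∈ s, (y i + e i)) ^ 2 := by
  have cauchy_schwarz :
      (c * ∑ i ∈ s, e i) ^ 2 ≤ c ^ 2 * (#s : ℝ) * ∑ i ∈ s, e i ^ 2 := by
    rw [mul_pow, mul_assoc]
    exact mul_le_mul_of_nonneg_left sq_sum_le_card_mul_sum_sq (sq_nonneg c)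
  rw [sum_add_distrib, mul_add]
  -- `(Y + F)² - Y² / 2 + F² = (Y + 2F)² / 2`
  nlinarith [sq_nonneg (c * ∑ i ∈ s, y i + 2 * c * ∑ i ∈ s, e i)]

lemma sum_sq_mul_sum_le_card {ι κ : Type*} [Fintype κ] {Γ : κ → Finset ι} {d : ℕ}
    (hΓ : ∀ j, #(Γ j) = d) {z : ι → ℝ} (hz : ∀ i, z i ∈ Set.Icc (-1 : ℝ) 1) :
    ∑ j, ((1 / (d : ℝ)) * ∑ i ∈ Γ j, z i) ^ 2 ≤ (Fintype.card κ : ℝ) := by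
  refine (sum_le_sum (g := fun _ => (1 : ℝ)) fun j _ => (sq_le_one_iff_abs_le_one _).mpr ?_).trans
    (by simp)
  rcases Nat.eq_zero_or_pos d with rfl | hd
  · simp
  calc |(1 / (d : ℝ)) * ∑ i ∈ Γ j, z i| ≤ (1 / d) * ∑ i ∈ Γ j, |z i| := by
        rw [abs_mul, abs_of_pos (by positivity)]
        exact mul_le_mul_of_nonneg_left (abs_sum_le_sum_abs _ _) (by positivity)
    _ ≤ (1 / d) * ∑ _i ∈ Γ j, 1 :=
        mul_le_mul_of_nonneg_left (sum_le_sum fun i _ => abs_le.mpr (hz i)) (by positivity)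
    _ = 1 := by simp [hΓ j, hd.ne']

lemma exists_le_and_le_of_le_expect_sub {Ω : Type*} [Fintype Ω] [Nonempty Ω] {A B : Ω → ℝ}
    {M a b : ℝ} (hA : ∀ ω, A ω ≤ M) (hB : ∀ ω, 0 ≤ B ω) (hM : 0 ≤ M) (ha : 0 < a)
    (hb : 0 < b) (h : a ≤ 𝔼 ω, (A ω - M / b * B ω)) : ∃ ω, a ≤ A ω ∧ B ω ≤ b := by
  obtain ⟨ω, -, hω⟩ := exists_le_of_le_expect univ_nonempty h
  have penalty_nonneg : 0 ≤ M / b * B ω := mul_nonneg (div_nonneg hM hb.le) (hB ω)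
  have hM : 0 < M := by linarith [hA ω]
  refine ⟨ω, by linarith, ?_⟩
  have : M * B ω ≤ M * b := by
    have : M / b * B ω ≤ M := by linarith [hA ω]
    rwa [div_mul_eq_mul_div, div_le_iff₀ hb] at this
  exact le_of_mul_le_mul_left this hM

lemma mul_one_add_div_pow_twelve_le_div_log {d D M : ℝ} (hd : 2 ≤ d) (hM : 0 ≤ M)
    (hMD : M ≤ d * D) : 2 * M * (1 + d) / d ^ 12 ≤ D / (96 * log d) := by
  have hlog : 0 < log d := log_pos (by linarith)
  have hlog_le : log d ≤ d := (log_le_sub_one_of_pos (by linarith)).trans (by linarith)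
  have hD : 0 ≤ d * D := hM.trans hMD
  have hd9 : (2 : ℝ) ^ 9 ≤ d ^ 9 := pow_le_pow_left₀ (by norm_num) hd 9
  rw [div_le_div_iff₀ (by positivity) (by positivity)]
  calc 2 * M * (1 + d) * (96 * log d) ≤ 2 * (d * D) * (2 * d) * (96 * d) := by
        gcongr
        linarith
    _ ≤ 2 ^ 9 * (d ^ 2 * (d * D)) := by nlinarith [mul_nonneg (sq_nonneg d) hD]
    _ ≤ d ^ 9 * (d ^ 2 * (d * D)) := by gcongr
    _ = D * d ^ 12 := by ring

lemma div_log_le_sub_rounding_loss {d D M N : ℝ} (hd : 2 ≤ d) (hM : 0 ≤ M) (hN : 0 < N)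
    (hMD : M ≤ d * D) :
    D / (96 * log d) ≤ D / (2 * √(24 * log d) ^ 2) - M * (2 * exp (-(√(24 * log d) ^ 2 / 2))) -
      M / (N / d) * (N * (2 * exp (-(√(24 * log d) ^ 2 / 2)))) := by
  have hlog : 0 < log d := log_pos (by linarith)
  have hτ_sq : √(24 * log d) ^ 2 = 24 * log d := sq_sqrt (by positivity)
  have htail : exp (-(24 * log d / 2)) = (d ^ 12)⁻¹ := by
    rw [exp_neg, show 24 * log d / 2 = (12 : ℕ) * log d by push_cast; ring, exp_nat_mul,
      exp_log (by positivity)]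
  have penalty : M / (N / d) * (N * (2 * (d ^ 12)⁻¹)) = 2 * M * d / d ^ 12 := by
    field_simp
  rw [hτ_sq, htail, penalty]
  calc D / (96 * log d) = D / (2 * (24 * log d)) - D / (96 * log d) := by ring
    _ ≤ D / (2 * (24 * log d)) - 2 * M * (1 + d) / d ^ 12 := by
        linarith [mul_one_add_div_pow_twelve_le_div_log hd hM hMD]
    _ = _ := by ring

lemma two_le_sq_sqrt_mul_log {d : ℝ} (hd : 2 ≤ d) : 2 ≤ √(24 * log d) ^ 2 := by
  have := log_two_gt_d9
  have := log_le_log two_pos hd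
  rw [sq_sqrt (by linarith)]
  linarith

section Rounding

variable {Ω ι κ H : Type*} [NormedAddCommGroup H] [InnerProductSpace ℝ H]

/-- A finite, uniformly weighted stand-in for a standard Gaussian vector in `H`. -/
structure IsIsotropicSubgaussian [Fintype Ω] (g : Ω → H) : Prop where
  expect_inner_sq : ∀ u, 𝔼 ω, ⟪u, g ω⟫ ^ 2 = ‖u‖ ^ 2
  expect_exp_inner_le : ∀ u l, 𝔼 ω, exp (l * ⟪u, g ω⟫) ≤ exp (l ^ 2 * ‖u‖ ^ 2 / 2)

noncomputable def rademacherDirection [Fintype ι] (b : OrthonormalBasis ι ℝ H)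
    (ε : ι → Bool) : H :=
  ∑ m, rademacher (ε m) • b m

lemma isIsotropicSubgaussian_rademacherDirection [Fintype ι] [DecidableEq ι]
    (b : OrthonormalBasis ι ℝ H) : IsIsotropicSubgaussian (rademacherDirection b) := by
  have inner_eq :
      ∀ u ε, ⟪u, rademacherDirection b ε⟫ = ∑ m, rademacher (ε m) * ⟪b m, u⟫ := by
    intro u ε
    simp only [rademacherDirection, inner_sum, real_inner_smul_right, real_inner_comm]
  constructor
  · intro u
    simp only [inner_eq, expect_sq_sum_rademacher_mul, b.sum_sq_inner_right]
  · intro u l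
    simpa only [inner_eq, b.sum_sq_inner_right] using
      expect_exp_sum_rademacher_mul_le (fun m => ⟪b m, u⟫) l

variable {g : Ω → H} {τ : ℝ} {v : ι → H}

noncomputable def clipRound (g : Ω → H) (τ : ℝ) (v : ι → H) (ω : Ω) (i : ι) : ℝ :=
  clip (⟪v i, g ω⟫ / τ)

lemma abs_sum_clipRound_le [Fintype ι] (hv0 : ∑ i, v i = 0) (ω : Ω) :
    |∑ i, clipRound g τ v ω i| ≤ ∑ i, |clipRound g τ v ω i - ⟪v i, g ω⟫ / τ| := by
  have projection_sum : ∑ i, ⟪v i, g ω⟫ / τ = 0 := by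
    rw [← sum_div, ← sum_inner, hv0, inner_zero_left, zero_div]
  rw [← sub_zero (∑ i, clipRound g τ v ω i), ← projection_sum, ← sum_sub_distrib]
  exact abs_sum_le_sum_abs _ _

namespace IsIsotropicSubgaussian

variable [Fintype Ω]

lemma expect_exp_abs_inner_le (hg : IsIsotropicSubgaussian g) {u : H} (hu : ‖u‖ ≤ 1)
    (t : ℝ) :
    𝔼 ω, exp (t * |⟪u, g ω⟫|) ≤ 2 * exp (t ^ 2 / 2) := by
  have mgf_le : ∀ l, l ^ 2 = t ^ 2 → 𝔼 ω, exp (l * ⟪u, g ω⟫) ≤ exp (t ^ 2 / 2) := by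
    intro l hl
    refine (hg.expect_exp_inner_le u l).trans (exp_le_exp.mpr ?_)
    have : ‖u‖ ^ 2 ≤ 1 := pow_le_one₀ (norm_nonneg u) hu
    rw [hl]
    nlinarith [sq_nonneg t]
  calc 𝔼 ω, exp (t * |⟪u, g ω⟫|)
      ≤ 𝔼 ω, (exp (t * ⟪u, g ω⟫) + exp (-t * ⟪u, g ω⟫)) := by
        refine expect_le_expect fun ω _ => ?_
        rcases abs_cases ⟪u, g ω⟫ with ⟨h, -⟩ | ⟨h, -⟩ <;> rw [h]
        · linarith [exp_pos (-t * ⟪u, g ω⟫)]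
        · rw [mul_neg, ← neg_mul]; linarith [exp_pos (t * ⟪u, g ω⟫)]
    _ ≤ 2 * exp (t ^ 2 / 2) := by
        rw [expect_add_distrib, two_mul]
        exact add_le_add (mgf_le t rfl) (mgf_le (-t) (neg_sq t))

lemma expect_exp_tail_le (hg : IsIsotropicSubgaussian g) {u : H} (hu : ‖u‖ ≤ 1)
    (hτ : 0 < τ) :
    𝔼 ω, exp (τ ^ 2 * (|⟪u, g ω⟫ / τ| - 1)) ≤ 2 * exp (-(τ ^ 2 / 2)) := by
  have split : ∀ ω,
      exp (τ ^ 2 * (|⟪u, g ω⟫ / τ| - 1)) = exp (-τ ^ 2) * exp (τ * |⟪u, g ω⟫|) := by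
    intro ω
    rw [← exp_add, abs_div, abs_of_pos hτ]
    congr 1
    field_simp
    ring
  calc 𝔼 ω, exp (τ ^ 2 * (|⟪u, g ω⟫ / τ| - 1))
      = exp (-τ ^ 2) * 𝔼 ω, exp (τ * |⟪u, g ω⟫|) := by simp only [split, mul_expect]
    _ ≤ exp (-τ ^ 2) * (2 * exp (τ ^ 2 / 2)) :=
        mul_le_mul_of_nonneg_left (hg.expect_exp_abs_inner_le hu τ) (exp_nonneg _)
    _ = 2 * exp (-(τ ^ 2 / 2)) := by
        rw [mul_left_comm, ← exp_add]
        ring_nf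

lemma expect_clip_sub_le (hg : IsIsotropicSubgaussian g) {u : H} (hu : ‖u‖ ≤ 1)
    (hτ : 0 < τ) (hτ2 : 2 ≤ τ ^ 2) :
    𝔼 ω, |clip (⟪u, g ω⟫ / τ) - ⟪u, g ω⟫ / τ| ≤ 2 * exp (-(τ ^ 2 / 2)) ∧
      𝔼 ω, (clip (⟪u, g ω⟫ / τ) - ⟪u, g ω⟫ / τ) ^ 2 ≤ 2 * exp (-(τ ^ 2 / 2)) :=
  ⟨(expect_le_expect fun _ _ => (clip_sub_le_exp hτ2 _).1).trans (hg.expect_exp_tail_le hu hτ),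
    (expect_le_expect fun _ _ => (clip_sub_le_exp hτ2 _).2).trans (hg.expect_exp_tail_le hu hτ)⟩

lemma expect_sum_abs_clipRound_sub_le [Fintype ι] (hg : IsIsotropicSubgaussian g)
    (hv : ∀ i, ‖v i‖ ≤ 1) (hτ : 0 < τ) (hτ2 : 2 ≤ τ ^ 2) :
    𝔼 ω, ∑ i, |clipRound g τ v ω i - ⟪v i, g ω⟫ / τ| ≤
      Fintype.card ι * (2 * exp (-(τ ^ 2 / 2))) := by
  rw [expect_sum_comm, ← nsmul_eq_mul, ← card_univ, ← sum_const]
  exact sum_le_sum fun i _ => (hg.expect_clip_sub_le (hv i) hτ hτ2).1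

lemma expect_objective_ge [Fintype κ] [Nonempty Ω] (hg : IsIsotropicSubgaussian g)
    (hv : ∀ i, ‖v i‖ ≤ 1) (hτ : 0 < τ) (hτ2 : 2 ≤ τ ^ 2) {Γ : κ → Finset ι}
    {d : ℕ} (hΓ : ∀ j, #(Γ j) = d) (hd : 0 < d) :
    (∑ j, ‖(1 / (d : ℝ)) • ∑ i ∈ Γ j, v i‖ ^ 2) / (2 * τ ^ 2) -
        Fintype.card κ * (2 * exp (-(τ ^ 2 / 2))) ≤
      𝔼 ω, ∑ j, ((1 / (d : ℝ)) * ∑ i ∈ Γ j, clipRound g τ v ω i) ^ 2 := by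
  set w : κ → H := fun j => (1 / (d : ℝ)) • ∑ i ∈ Γ j, v i
  set e : Ω → ι → ℝ := fun ω i => clipRound g τ v ω i - ⟪v i, g ω⟫ / τ
  have inner_w :
      ∀ j ω, ⟪w j, g ω⟫ / τ = (1 / (d : ℝ)) * ∑ i ∈ Γ j, ⟪v i, g ω⟫ / τ := by
    intro j ω
    rw [real_inner_smul_left, sum_inner, mul_div_assoc, sum_div]
  have pointwise : ∀ j ω,
      (⟪w j, g ω⟫ / τ) ^ 2 / 2 - (1 / (d : ℝ)) * ∑ i ∈ Γ j, e ω i ^ 2 ≤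
        ((1 / (d : ℝ)) * ∑ i ∈ Γ j, clipRound g τ v ω i) ^ 2 := by
    intro j ω
    have h :=
      half_sq_sub_le_sq_mul_sum_add (Γ j) (1 / (d : ℝ)) (fun i => ⟪v i, g ω⟫ / τ) (e ω)
    simp only [e, add_sub_cancel, hΓ j] at h
    rw [inner_w]
    convert h using 3
    field_simp
  have second_moment :
      ∀ j, 𝔼 ω, (⟪w j, g ω⟫ / τ) ^ 2 / 2 = ‖w j‖ ^ 2 / (2 * τ ^ 2) := by
    intro j
    simp only [div_pow, ← expect_div, hg.expect_inner_sq]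
    ring
  have error_moment :
      ∀ j, 𝔼 ω, (1 / (d : ℝ)) * ∑ i ∈ Γ j, e ω i ^ 2 ≤ 2 * exp (-(τ ^ 2 / 2)) := by
    intro j
    rw [← mul_expect, expect_sum_comm]
    calc (1 / (d : ℝ)) * ∑ i ∈ Γ j, 𝔼 ω, e ω i ^ 2
        ≤ (1 / (d : ℝ)) * ∑ _i ∈ Γ j, 2 * exp (-(τ ^ 2 / 2)) :=
          mul_le_mul_of_nonneg_left
            (sum_le_sum fun i _ => (hg.expect_clip_sub_le (hv i) hτ hτ2).2) (by positivity)
      _ = 2 * exp (-(τ ^ 2 / 2)) := by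
          rw [sum_const, hΓ j, nsmul_eq_mul]
          field_simp
  calc (∑ j, ‖w j‖ ^ 2) / (2 * τ ^ 2) - Fintype.card κ * (2 * exp (-(τ ^ 2 / 2)))
      = ∑ j, (‖w j‖ ^ 2 / (2 * τ ^ 2) - 2 * exp (-(τ ^ 2 / 2))) := by
        rw [sum_sub_distrib, sum_div, sum_const, card_univ, nsmul_eq_mul]
    _ ≤ ∑ j, 𝔼 ω,
          ((⟪w j, g ω⟫ / τ) ^ 2 / 2 - (1 / (d : ℝ)) * ∑ i ∈ Γ j, e ω i ^ 2) := by
        refine sum_le_sum fun j _ => ?_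
        rw [expect_sub_distrib, second_moment]
        linarith [error_moment j]
    _ = 𝔼 ω, ∑ j,
          ((⟪w j, g ω⟫ / τ) ^ 2 / 2 - (1 / (d : ℝ)) * ∑ i ∈ Γ j, e ω i ^ 2) :=
        (expect_sum_comm _ _ _).symm
    _ ≤ _ := expect_le_expect fun ω _ => sum_le_sum fun j _ => pointwise j ω

theorem exists_clipRound [Nonempty Ω] [Fintype ι] [Fintype κ] [Nonempty κ]
    (hg : IsIsotropicSubgaussian g) (hv : ∀ i, ‖v i‖ ≤ 1) (hv0 : ∑ i, v i = 0)
    {Γ : κ → Finset ι} {d : ℕ} (hd : 2 ≤ d) (hΓ : ∀ j, #(Γ j) = d)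
    (hδ : (Fintype.card κ : ℝ) / d ≤
      ∑ j, ‖(1 / (d : ℝ)) • ∑ i ∈ Γ j, v i‖ ^ 2) :
    ∃ ω, |∑ i, clipRound g √(24 * log d) v ω i| ≤ Fintype.card ι / d ∧
      (∑ j, ‖(1 / (d : ℝ)) • ∑ i ∈ Γ j, v i‖ ^ 2) / (96 * log d) ≤
        ∑ j, ((1 / (d : ℝ)) * ∑ i ∈ Γ j, clipRound g √(24 * log d) v ω i) ^ 2 := by
  set D := ∑ j, ‖(1 / (d : ℝ)) • ∑ i ∈ Γ j, v i‖ ^ 2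
  set τ := √(24 * log d)
  set M : ℝ := (Fintype.card κ : ℝ)
  set N : ℝ := (Fintype.card ι : ℝ)
  have hd' : (2 : ℝ) ≤ d := by exact_mod_cast hd
  have hlog : 0 < log d := log_pos (by linarith)
  have hM : 0 < M := by simp [M, Fintype.card_pos]
  have hN : 0 < N := by
    obtain ⟨j⟩ := ‹Nonempty κ›
    have := (hΓ j).symm.trans_le (card_le_univ (Γ j))
    simp only [N]
    exact_mod_cast (by omega : 0 < Fintype.card ι)
  have hMD : M ≤ d * D := by rwa [div_le_iff₀ (by positivity), mul_comm] at hδ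
  have hD : 0 < D := (div_pos hM (by positivity)).trans_le hδ
  have hτ : 0 < τ := sqrt_pos.mpr (by positivity)
  have expect_penalized : D / (96 * log d) ≤
      𝔼 ω, (∑ j, ((1 / (d : ℝ)) * ∑ i ∈ Γ j, clipRound g τ v ω i) ^ 2 -
        M / (N / d) * ∑ i, |clipRound g τ v ω i - ⟪v i, g ω⟫ / τ|) := calc
    D / (96 * log d)
      ≤ D / (2 * τ ^ 2) - M * (2 * exp (-(τ ^ 2 / 2))) -
          M / (N / d) * (N * (2 * exp (-(τ ^ 2 / 2)))) :=
        div_log_le_sub_rounding_loss hd' hM.le hN hMD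
    _ ≤ 𝔼 ω, ∑ j, ((1 / (d : ℝ)) * ∑ i ∈ Γ j, clipRound g τ v ω i) ^ 2 -
          M / (N / d) * 𝔼 ω, ∑ i, |clipRound g τ v ω i - ⟪v i, g ω⟫ / τ| :=
        sub_le_sub (hg.expect_objective_ge hv hτ (two_le_sq_sqrt_mul_log hd') hΓ (by omega))
          (mul_le_mul_of_nonneg_left
            (hg.expect_sum_abs_clipRound_sub_le hv hτ (two_le_sq_sqrt_mul_log hd'))
            (by positivity))
    _ = _ := by rw [expect_sub_distrib, mul_expect]
  obtain ⟨ω, h_objective, h_error⟩ := exists_le_and_le_of_le_expect_sub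
    (fun ω => sum_sq_mul_sum_le_card hΓ fun i => clip_mem_Icc _)
    (fun ω => sum_nonneg fun i _ => abs_nonneg _) hM.le (div_pos hD (by positivity))
    (div_pos hN (by positivity)) expect_penalized
  exact ⟨ω, (abs_sum_clipRound_le hv0 ω).trans h_error, h_objective⟩

end IsIsotropicSubgaussian

end Rounding

end GaussianRounding

open GaussianRounding in
/-- Gaussian rounding of an SDP solution: there are universal constants `C₁, c > 0` such
that any vectors `v_i` with `‖v_i‖ ≤ 1`, `Σ v_i = 0` and objective `δ ≥ M/d` can be
rounded to scalars `z_i ∈ [-1,1]` with `|Σ z_i| ≤ C₁·N/d` and scalar objective at least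
`c·δ/log d`. -/
theorem stmt_8 : ∃ C₁ : ℝ, 0 < C₁ ∧ ∃ c : ℝ, 0 < c ∧
    ∀ d : ℕ, 2 ≤ d → ∀ (N M : ℕ) (Γ : Fin M → Finset (Fin N)),
    (∀ j, (Γ j).card = d) →
    ∀ (H : Type) [NormedAddCommGroup H] [InnerProductSpace ℝ H],
    FiniteDimensional ℝ H →
    ∀ v : Fin N → H, (∀ i, ‖v i‖ ≤ 1) → (∑ i, v i = 0) →
    (M : ℝ) / d ≤ ∑ j, ‖(1 / (d : ℝ)) • ∑ i ∈ Γ j, v i‖ ^ 2 →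
    ∃ z : Fin N → ℝ, (∀ i, z i ∈ Set.Icc (-1 : ℝ) 1) ∧
      |∑ i, z i| ≤ C₁ * N / d ∧
      c * (∑ j, ‖(1 / (d : ℝ)) • ∑ i ∈ Γ j, v i‖ ^ 2) / Real.log d ≤
        ∑ j, ((1 / (d : ℝ)) * ∑ i ∈ Γ j, z i) ^ 2 := by
  refine ⟨1, one_pos, 1 / 96, by norm_num, ?_⟩
  intro d hd N M Γ hΓ H _ _ _ v hv hv0 hδ
  rcases Nat.eq_zero_or_pos M with rfl | hM
  · exact ⟨0, fun _ => by norm_num, by simp; positivity, by simp⟩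
  have : Nonempty (Fin M) := ⟨⟨0, hM⟩⟩
  set g := rademacherDirection (stdOrthonormalBasis ℝ H)
  obtain ⟨ω, h_sum, h_objective⟩ :=
    (isIsotropicSubgaussian_rademacherDirection (stdOrthonormalBasis ℝ H)).exists_clipRound
      hv hv0 hd hΓ (by simpa using hδ)
  refine ⟨clipRound g √(24 * log d) v ω, fun i => clip_mem_Icc _,
    by simpa only [Fintype.card_fin, one_mul] using h_sum, ?_⟩
  convert h_objective using 1
  ring
end

section
/- Let ρ ∈ (0,1), let d ≥ 4 be an integer, set δ = (1−ρ)·√(2/d), and let y ∈ [−1,1]. Then (1/2)·[ (1−ρ+δ)^{(1+y)d/2}·(1−ρ−δ)^{(1−y)d/2} + (1−ρ−δ)^{(1+y)d/2}·(1−ρ+δ)^{(1−y)d/2} ] ≥ e^{−2}·(1−ρ)^d·d·y², where the exponents are real powers (note 0 < 1−ρ−δ < 1−ρ+δ < 1 for d ≥ 4). -/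
/-!
Write `1 - ρ ± δ = (1 - ρ)(1 ± u)` with `u² = 2 / d`. The symmetrized sum is then
`(1 - ρ)^d (1 - u²)^(d/2) cosh (y d / 2 · log ((1 + u) / (1 - u)))`. The middle factor is at least
`e⁻²` because `log (1 - x) ≥ -x / (1 - x)`, and `d ≥ 4` is exactly what makes `d / (d - 2) ≤ 2`.
The cosh is at least its quadratic Taylor term, and `log ((1 + u) / (1 - u)) ≥ 2u` is the first
term of its power series, so the cosh is at least `2 (y d / 2)² u² = d y²`.
-/

namespace Real

lemma sq_div_two_le_cosh (θ : ℝ) : θ ^ 2 / 2 ≤ cosh θ := by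
  simpa using le_hasSum (hasSum_cosh θ) 1 fun k _ => by
    rw [pow_mul]; positivity

lemma two_mul_le_log_div {u : ℝ} (h0 : 0 ≤ u) (h1 : u < 1) :
    2 * u ≤ log ((1 + u) / (1 - u)) := by
  rw [log_div (by linarith) (by linarith)]
  simpa using le_hasSum (hasSum_log_sub_log_of_abs_lt_one (abs_lt.2 ⟨by linarith, h1⟩)) 0
    fun k _ => by positivity

lemma two_mul_sq_mul_sq_le_cosh_mul_log {u : ℝ} (h0 : 0 ≤ u) (h1 : u < 1) (t : ℝ) :
    2 * t ^ 2 * u ^ 2 ≤ cosh (t * log ((1 + u) / (1 - u))) :=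
  calc 2 * t ^ 2 * u ^ 2 = t ^ 2 * (2 * u) ^ 2 / 2 := by ring
    _ ≤ t ^ 2 * log ((1 + u) / (1 - u)) ^ 2 / 2 := by
      gcongr; exact two_mul_le_log_div h0 h1
    _ = (t * log ((1 + u) / (1 - u))) ^ 2 / 2 := by ring
    _ ≤ _ := sq_div_two_le_cosh _

lemma exp_neg_two_le_one_sub_two_div_rpow {x : ℝ} (hx : 4 ≤ x) :
    exp (-2) ≤ (1 - 2 / x) ^ (x / 2) := by
  have hx2 : 0 < x - 2 := by linarith
  have hpos : 0 < 1 - 2 / x := by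
    rw [sub_pos, div_lt_one (by linarith)]; linarith
  have hlog : -2 / (x - 2) ≤ log (1 - 2 / x) := by
    convert one_sub_inv_le_log_of_pos hpos using 1
    field_simp [hx2.ne']
    ring
  rw [rpow_def_of_pos hpos, exp_le_exp]
  calc (-2 : ℝ) ≤ -2 / (x - 2) * (x / 2) := by
        rw [div_mul_eq_mul_div, le_div_iff₀ hx2]; linarith
    _ ≤ log (1 - 2 / x) * (x / 2) := by gcongr

lemma half_mul_rpow_add_rpow_swap {a b : ℝ} (ha : 0 < a) (hb : 0 < b) (p q : ℝ) :
    1 / 2 * (a ^ p * b ^ q + b ^ p * a ^ q) =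
      (a * b) ^ ((p + q) / 2) * cosh ((p - q) / 2 * log (a / b)) := by
  simp only [rpow_def_of_pos ha, rpow_def_of_pos hb, rpow_def_of_pos (mul_pos ha hb),
    log_mul ha.ne' hb.ne', log_div ha.ne' hb.ne', cosh_eq, mul_add, mul_div_assoc', ← exp_add]
  ring_nf

lemma half_mul_rpow_add_rpow_swap_one_add_one_sub {c u : ℝ} (hc : 0 < c) (hu : |u| < 1)
    (x y : ℝ) :
    1 / 2 * ((c * (1 + u)) ^ ((1 + y) * x / 2) * (c * (1 - u)) ^ ((1 - y) * x / 2) +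
        (c * (1 - u)) ^ ((1 + y) * x / 2) * (c * (1 + u)) ^ ((1 - y) * x / 2)) =
      c ^ x * (1 - u ^ 2) ^ (x / 2) * cosh (y * x / 2 * log ((1 + u) / (1 - u))) := by
  obtain ⟨hu₀, hu₁⟩ := abs_lt.1 hu
  have h1 : 0 < 1 + u := by linarith
  have h2 : 0 < 1 - u := by linarith
  rw [half_mul_rpow_add_rpow_swap (by positivity) (by positivity),
    mul_div_mul_left _ _ hc.ne', show c * (1 + u) * (c * (1 - u)) = c ^ (2 : ℝ) * (1 - u ^ 2) by
      rw [rpow_two]; ring,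
    mul_rpow (by positivity) (by nlinarith), ← rpow_mul hc.le]
  ring_nf

end Real

open Real

theorem stmt_11_general (ρ : ℝ) (hρ1 : ρ < 1) (d : ℕ) (hd : 4 ≤ d)
    (δ : ℝ) (hδ : δ = (1 - ρ) * Real.sqrt (2 / (d : ℝ)))
    (y : ℝ) :
    Real.exp (-2) * (1 - ρ) ^ d * d * y ^ 2 ≤
      (1 / 2) * ((1 - ρ + δ) ^ ((1 + y) * (d : ℝ) / 2) *
            (1 - ρ - δ) ^ ((1 - y) * (d : ℝ) / 2)
          + (1 - ρ - δ) ^ ((1 + y) * (d : ℝ) / 2) *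
            (1 - ρ + δ) ^ ((1 - y) * (d : ℝ) / 2)) := by
  have hd4 : (4 : ℝ) ≤ d := by exact_mod_cast hd
  set u := √(2 / (d : ℝ))
  have hu2 : u ^ 2 = 2 / d := sq_sqrt (by positivity)
  have hu0 : 0 ≤ u := sqrt_nonneg _
  have hu1 : u < 1 := by
    rw [sqrt_lt' one_pos, one_pow, div_lt_one (by positivity)]; linarith
  rw [show 1 - ρ + δ = (1 - ρ) * (1 + u) by rw [hδ]; ring,
    show 1 - ρ - δ = (1 - ρ) * (1 - u) by rw [hδ]; ring,
    half_mul_rpow_add_rpow_swap_one_add_one_sub (by linarith) (abs_lt.2 ⟨by linarith, hu1⟩),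
    rpow_natCast, hu2]
  calc exp (-2) * (1 - ρ) ^ d * d * y ^ 2
      = (1 - ρ) ^ d * exp (-2) * (2 * (y * d / 2) ^ 2 * u ^ 2) := by
        rw [hu2]; field_simp
    _ ≤ (1 - ρ) ^ d * (1 - 2 / d) ^ ((d : ℝ) / 2) *
          cosh (y * d / 2 * log ((1 + u) / (1 - u))) := by
        have hρ : 0 < 1 - ρ := by linarith
        have hexp := exp_neg_two_le_one_sub_two_div_rpow hd4
        gcongr
        · exact mul_nonneg (pow_nonneg hρ.le d) ((exp_pos _).le.trans hexp)
        · exact two_mul_sq_mul_sq_le_cosh_mul_log hu0 hu1 _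

/-- Key estimate for rounding biases to bits: with `δ = (1-ρ)√(2/d)` and `y ∈ [-1,1]`,
`(1/2)·[(1-ρ+δ)^{(1+y)d/2}(1-ρ-δ)^{(1-y)d/2} + (1-ρ-δ)^{(1+y)d/2}(1-ρ+δ)^{(1-y)d/2}]
  ≥ e^{-2}·(1-ρ)^d·d·y²`. -/
theorem stmt_11 (ρ : ℝ) (hρ0 : 0 < ρ) (hρ1 : ρ < 1) (d : ℕ) (hd : 4 ≤ d)
    (δ : ℝ) (hδ : δ = (1 - ρ) * Real.sqrt (2 / (d : ℝ)))
    (y : ℝ) (hy : y ∈ Set.Icc (-1 : ℝ) 1) :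
    Real.exp (-2) * (1 - ρ) ^ d * d * y ^ 2 ≤
      (1 / 2) * ((1 - ρ + δ) ^ ((1 + y) * (d : ℝ) / 2) *
            (1 - ρ - δ) ^ ((1 - y) * (d : ℝ) / 2)
          + (1 - ρ - δ) ^ ((1 + y) * (d : ℝ) / 2) *
            (1 - ρ + δ) ^ ((1 - y) * (d : ℝ) / 2)) :=
  stmt_11_general ρ hρ1 d hd δ hδ y
end
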